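/- arXiv:cond-mat/0108388 — 8 statements merged into one kernel-verified Lean document; each statement's English description precedes it below -/
import Mathlib

section
/- Consider the planar charged oscillator in a constant magnetic field of strength B, governed by the linear system ẍ − Bẏ + αx = 0, ÿ + Bẋ + βy = 0, written as a first-order system ż = A₀z on ℝ⁴ with z = (x, y, ẋ, ẏ). If α < 0, β < 0 and B² + α + β > 2√(αβ), then every eigenvalue λ ∈ ℂ of the 4×4 real matrix A₀ has real part equal to zero (gyroscopic stabilization). -/
/-- The 4×4 matrix of the planar charged oscillator ẍ − Bẏ + αx = 0,
ÿ + Bẋ + βy = 0 written as a first-order system ż = A₀z with z = (x, y, ẋ, ẏ). -/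
noncomputable def gyroA (α β B : ℝ) : Matrix (Fin 4) (Fin 4) ℝ :=
  !![0, 0, 1, 0;
     0, 0, 0, 1;
     -α, 0, 0, B;
     0, -β, -B, 0]

/-!
The characteristic polynomial of `A₀` is `λ⁴ + pλ² + q` with `p = B² + α + β` and `q = αβ`.
The hypotheses give `p, q ≥ 0` and `p² ≥ 4q`, so both roots of the quadratic in `λ²` are real
and nonpositive, and a square root of a nonpositive real is purely imaginary.
-/

theorem det_smul_one_sub_gyroA (α β B : ℝ) (lam : ℂ) :
    (lam • (1 : Matrix (Fin 4) (Fin 4) ℂ) - (gyroA α β B).map Complex.ofReal).det =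
      lam ^ 4 + ((B ^ 2 + α + β : ℝ) : ℂ) * lam ^ 2 + ((α * β : ℝ) : ℂ) := by
  simp [gyroA, Matrix.det_succ_row_zero, Fin.sum_univ_succ, Matrix.one_apply, Fin.succAbove]
  ring

theorem Complex.re_eq_zero_of_sq_eq_ofReal_nonpos {z : ℂ} {r : ℝ} (hr : r ≤ 0)
    (h : z ^ 2 = r) : z.re = 0 := by
  have hre : z.re ^ 2 - z.im ^ 2 = r := by simpa [sq] using congrArg Complex.re h
  have him : z.re * z.im = 0 := by
    have : z.re * z.im + z.im * z.re = 0 := by simpa [sq] using congrArg Complex.im h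
    linarith
  rcases mul_eq_zero.1 him with hre0 | him0
  · exact hre0
  · nlinarith [sq_nonneg z.re]

theorem Complex.re_eq_zero_of_biquadratic_eq_zero {p q : ℝ} (hp : 0 ≤ p) (hq : 0 ≤ q)
    (hdisc : 4 * q ≤ p ^ 2) {z : ℂ} (hz : z ^ 4 + p * z ^ 2 + q = 0) : z.re = 0 := by
  set s := Real.sqrt (p ^ 2 - 4 * q)
  have hs : s * s = p ^ 2 - 4 * q := Real.mul_self_sqrt (by linarith)
  have hsp : s ≤ p := Real.sqrt_le_iff.2 ⟨hp, by linarith⟩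
  have hdiscrim : discrim (1 : ℂ) p q = (s : ℂ) * s := by
    rw [discrim]
    exact_mod_cast (by rw [hs]; ring : p ^ 2 - 4 * 1 * q = s * s)
  have hroots := (quadratic_eq_zero_iff one_ne_zero hdiscrim (z ^ 2)).1
    (by linear_combination hz)
  rcases hroots with h | h
  · refine Complex.re_eq_zero_of_sq_eq_ofReal_nonpos (r := (-p + s) / 2) (by linarith) ?_
    rw [h]; push_cast; ring
  · refine Complex.re_eq_zero_of_sq_eq_ofReal_nonpos (r := (-p - s) / 2)
      (by linarith [Real.sqrt_nonneg (p ^ 2 - 4 * q)]) ?_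
    rw [h]; push_cast; ring

/-- Gyroscopic stabilization: if α < 0, β < 0 and B² + α + β > 2√(αβ), then every
eigenvalue of A₀ is purely imaginary. -/
theorem stmt0 (α β B : ℝ) (hα : α < 0) (hβ : β < 0)
    (hB : B ^ 2 + α + β > 2 * Real.sqrt (α * β)) :
    ∀ lam : ℂ,
      (lam • (1 : Matrix (Fin 4) (Fin 4) ℂ) - (gyroA α β B).map Complex.ofReal).det = 0 →
      lam.re = 0 := by
  intro lam hdet
  have hq : 0 ≤ α * β := (mul_pos_of_neg_of_neg hα hβ).le
  have hsqrt : 0 ≤ Real.sqrt (α * β) := Real.sqrt_nonneg _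
  have hp : 0 ≤ B ^ 2 + α + β := by linarith
  have hdisc : 4 * (α * β) ≤ (B ^ 2 + α + β) ^ 2 :=
    calc 4 * (α * β) = (2 * Real.sqrt (α * β)) ^ 2 := by rw [mul_pow, Real.sq_sqrt hq]; norm_num
      _ ≤ (B ^ 2 + α + β) ^ 2 := pow_le_pow_left₀ (by positivity) hB.le 2
  rw [det_smul_one_sub_gyroA] at hdet
  exact Complex.re_eq_zero_of_biquadratic_eq_zero hp hq hdisc hdet
end

section
/- Consider the planar charged oscillator in a constant magnetic field of strength B, governed by the linear system ẍ − Bẏ + αx = 0, ÿ + Bẋ + βy = 0, written as a first-order system ż = A₀z on ℝ⁴ with z = (x, y, ẋ, ẏ). If α < 0, β < 0 and B² + α + β < 2√(αβ), then the 4×4 real matrix A₀ has an eigenvalue λ ∈ ℂ with strictly positive real part (the gyroscopic forces fail to stabilize). -/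
open Complex

theorem Complex.exists_sq_eq_and_re_pos_of_mem_slitPlane {μ : ℂ} (hμ : μ ∈ slitPlane) :
    ∃ l : ℂ, l ^ 2 = μ ∧ 0 < l.re := by
  obtain ⟨l, hl⟩ : ∃ l : ℂ, l ^ 2 = μ := IsAlgClosed.exists_pow_nat_eq μ two_pos
  have hre : l.re ≠ 0 := by
    intro h0
    rw [mem_slitPlane_iff, ← hl] at hμ
    simp only [sq, mul_re, mul_im, h0, mul_zero, zero_mul, add_zero, ne_eq, not_true_eq_false,
      or_false] at hμ
    nlinarith [sq_nonneg l.im]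
  rcases hre.lt_or_gt with hneg | hpos
  · exact ⟨-l, by rw [neg_sq, hl], by simpa using hneg⟩
  · exact ⟨l, hl, hpos⟩

theorem two_sqrt_mul_le_neg_add_of_nonpos {t₁ t₂ : ℝ} (h₁ : t₁ ≤ 0) (h₂ : t₂ ≤ 0) :
    2 * √(t₁ * t₂) ≤ -(t₁ + t₂) := by
  rw [← le_div_iff₀' two_pos, Real.sqrt_le_left (by linarith)]
  nlinarith [sq_nonneg (t₁ - t₂)]

theorem exists_quadratic_root_mem_slitPlane {s p : ℝ} (h : s < 2 * √p) :
    ∃ μ : ℂ, μ ^ 2 + s * μ + p = 0 ∧ μ ∈ slitPlane := by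
  obtain ⟨w, hw⟩ : ∃ w : ℂ, w ^ 2 = s ^ 2 - 4 * p := IsAlgClosed.exists_pow_nat_eq _ two_pos
  set μ₁ : ℂ := (-s + w) / 2
  set μ₂ : ℂ := (-s - w) / 2
  have hroot₁ : μ₁ ^ 2 + s * μ₁ + p = 0 := by linear_combination hw / 4
  have hroot₂ : μ₂ ^ 2 + s * μ₂ + p = 0 := by linear_combination hw / 4
  by_contra! hnone
  have h₁ := hnone μ₁ hroot₁
  have h₂ := hnone μ₂ hroot₂
  simp only [mem_slitPlane_iff, not_or, not_lt, not_not] at h₁ h₂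
  have hsum : μ₁.re + μ₂.re = -s := by
    simpa using congrArg re (show μ₁ + μ₂ = -s by ring)
  have hprod : μ₁.re * μ₂.re = p := by
    simpa [h₁.2, h₂.2] using congrArg re (show μ₁ * μ₂ = p by linear_combination -hw / 4)
  have := two_sqrt_mul_le_neg_add_of_nonpos h₁.1 h₂.1
  rw [hsum, hprod] at this
  linarith

theorem exists_biquadratic_root_re_pos {s p : ℝ} (h : s < 2 * √p) :
    ∃ lam : ℂ, lam ^ 4 + s * lam ^ 2 + p = 0 ∧ 0 < lam.re := by
  obtain ⟨μ, hroot, hμ⟩ := exists_quadratic_root_mem_slitPlane h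
  obtain ⟨lam, rfl, hre⟩ := exists_sq_eq_and_re_pos_of_mem_slitPlane hμ
  exact ⟨lam, by linear_combination hroot, hre⟩

theorem det_smul_one_sub_map_gyroA (α β B : ℝ) (lam : ℂ) :
    (lam • (1 : Matrix (Fin 4) (Fin 4) ℂ) - (gyroA α β B).map ofReal).det
      = lam ^ 4 + ((B ^ 2 + α + β : ℝ) : ℂ) * lam ^ 2 + ((α * β : ℝ) : ℂ) := by
  simp [Matrix.det_succ_row_zero, Fin.sum_univ_succ, Fin.succAbove, gyroA, Matrix.one_apply]
  ring

theorem stmt1_general (α β B : ℝ)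
    (hB : B ^ 2 + α + β < 2 * Real.sqrt (α * β)) :
    ∃ lam : ℂ,
      (lam • (1 : Matrix (Fin 4) (Fin 4) ℂ) - (gyroA α β B).map Complex.ofReal).det = 0 ∧
      0 < lam.re := by
  obtain ⟨lam, hroot, hre⟩ := exists_biquadratic_root_re_pos hB
  exact ⟨lam, by rw [det_smul_one_sub_map_gyroA, hroot], hre⟩

/-- Failure of gyroscopic stabilization: if α < 0, β < 0 and B² + α + β < 2√(αβ),
then A₀ has an eigenvalue with strictly positive real part. -/
theorem stmt1 (α β B : ℝ) (hα : α < 0) (hβ : β < 0)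
    (hB : B ^ 2 + α + β < 2 * Real.sqrt (α * β)) :
    ∃ lam : ℂ,
      (lam • (1 : Matrix (Fin 4) (Fin 4) ℂ) - (gyroA α β B).map Complex.ofReal).det = 0 ∧
      0 < lam.re :=
  stmt1_general α β B hB
end

section
/- Let M, S, V be real n×n matrices with M symmetric positive definite, S skew-symmetric, and V symmetric and invertible, and consider the quadratic matrix pencil P(λ) = λ²M + λS + V associated with the Chetaev system Mq̈ + Sq̇ + Vq = 0. If V has an odd number of negative eigenvalues (counting multiplicity), then there exists a real number λ > 0 with det(λ²M + λS + V) = 0; in particular the origin of the Chetaev system is spectrally unstable. -/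
open Matrix

lemma prod_neg_iff_odd_card {ι : Type*} (s : Finset ι) (f : ι → ℝ)
    (h0 : ∀ i ∈ s, f i ≠ 0) :
    s.prod f < 0 ↔ Odd (s.filter fun i => f i < 0).card := by
  classical
  induction s using Finset.cons_induction with
  | empty => simp
  | cons a s ha ih =>
    have hfa : f a ≠ 0 := h0 a (Finset.mem_cons_self a s)
    have hall : ∀ i ∈ s, f i ≠ 0 := fun i hi => h0 i (Finset.mem_cons_of_mem hi)
    have hps : s.prod f ≠ 0 := Finset.prod_ne_zero_iff.2 hall
    have ih' := ih hall
    rw [Finset.prod_cons, Finset.filter_cons]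
    by_cases hfa' : f a < 0
    · simp only [hfa', if_pos, Finset.card_cons, Nat.odd_add_one, ← ih']
      constructor
      · intro h hneg
        nlinarith
      · intro h
        have hpos : 0 < s.prod f := lt_of_le_of_ne (not_lt.1 (fun hc => h hc)) (Ne.symm hps)
        nlinarith
    · have hpos : 0 < f a := lt_of_le_of_ne (not_lt.1 hfa') (Ne.symm hfa)
      simp only [hfa', if_neg, not_false_iff, ← ih']
      constructor
      · intro h
        nlinarith
      · intro h
        nlinarith

/-- Chetaev's instability criterion: for the Chetaev system Mq̈ + Sq̇ + Vq = 0 with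
M symmetric positive definite, S skew-symmetric, V symmetric and invertible, if V has
an odd number of negative eigenvalues (with multiplicity) then the quadratic pencil
λ²M + λS + V has a positive real root of its determinant, so the origin is spectrally
unstable. -/
theorem stmt2 {n : ℕ} (M S V : Matrix (Fin n) (Fin n) ℝ)
    (hM : M.PosDef) (hS : Sᵀ = -S) (hV : V.IsHermitian) (hVdet : V.det ≠ 0)
    (hodd : Odd (Finset.univ.filter fun i => hV.eigenvalues i < 0).card) :
    ∃ lam : ℝ, 0 < lam ∧ (lam ^ 2 • M + lam • S + V).det = 0 := by
  classical
  set f : ℝ → ℝ := fun lam => (lam ^ 2 • M + lam • S + V).det with hf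
  -- continuity of f
  have hcont : Continuous f := by
    apply Continuous.matrix_det
    fun_prop
  -- f 0 = det V < 0
  have hdetV : V.det = ∏ i, hV.eigenvalues i := by
    have := hV.det_eq_prod_eigenvalues
    exact_mod_cast this
  have heignz : ∀ i ∈ Finset.univ, hV.eigenvalues i ≠ 0 := by
    intro i _ hzero
    apply hVdet
    rw [hdetV]
    exact Finset.prod_eq_zero (Finset.mem_univ i) hzero
  have hdetVneg : V.det < 0 := by
    rw [hdetV]
    exact (prod_neg_iff_odd_card Finset.univ _ heignz).2 hodd
  have hf0 : f 0 < 0 := by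
    simpa [hf] using hdetVneg
  -- find λ₀ > 0 with f λ₀ > 0
  have hg : Continuous fun t : ℝ => (M + t • S + t ^ 2 • V).det := by
    apply Continuous.matrix_det
    fun_prop
  have hgt : Filter.Tendsto (fun t : ℝ => (M + t • S + t ^ 2 • V).det)
      (nhdsWithin 0 (Set.Ioi 0)) (nhds M.det) := by
    have h0 : (M + (0:ℝ) • S + (0:ℝ) ^ 2 • V).det = M.det := by simp
    have := hg.tendsto 0
    rw [h0] at this
    exact this.mono_left nhdsWithin_le_nhds
  have hev : ∀ᶠ t in nhdsWithin 0 (Set.Ioi (0:ℝ)),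
      0 < (M + t • S + t ^ 2 • V).det :=
    hgt.eventually (eventually_gt_nhds hM.det_pos)
  obtain ⟨t, hgtpos, ht⟩ := (hev.and self_mem_nhdsWithin).exists
  have htpos : 0 < t := ht
  set lam0 : ℝ := t⁻¹ with hlam0
  have hlam0pos : 0 < lam0 := inv_pos.2 htpos
  have h1 : lam0 ^ 2 * t = lam0 := by
    rw [hlam0]; field_simp
  have h2 : lam0 ^ 2 * t ^ 2 = 1 := by
    rw [hlam0]; field_simp
  have hscale : lam0 ^ 2 • M + lam0 • S + V = lam0 ^ 2 • (M + t • S + t ^ 2 • V) := by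
    rw [smul_add, smul_add, smul_smul, smul_smul, h1, h2, one_smul]
  have hflam0 : 0 < f lam0 := by
    rw [hf]
    simp only
    rw [hscale, Matrix.det_smul]
    positivity
  -- IVT
  have hsub : Set.Ioo (f 0) (f lam0) ⊆ f '' Set.Ioo 0 lam0 :=
    intermediate_value_Ioo (le_of_lt hlam0pos) hcont.continuousOn
  have h0mem : (0:ℝ) ∈ Set.Ioo (f 0) (f lam0) := ⟨hf0, hflam0⟩
  obtain ⟨lam, hlam, hflam⟩ := hsub h0mem
  exact ⟨lam, hlam.1, hflam⟩
end

section
/- Let M and V be real n×n matrices with M symmetric positive definite and V symmetric and invertible. If V has an even number of negative eigenvalues (counting multiplicity), then there exists a real skew-symmetric n×n matrix S such that every λ ∈ ℂ with det(λ²M + λS + V) = 0 has real part equal to zero; i.e. S can be chosen so that the origin of the Chetaev system Mq̈ + Sq̇ + Vq = 0 is spectrally stable. -/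
/-!
Write `M = P Pᵀ` and `V = P D Pᵀ` with `P` invertible and `D = diagonal d` (take `P = L U` with `L`
the square root of `M` and `U` orthogonally diagonalising `L⁻¹ V L⁻¹`). The congruence by `P`
turns the pencil `λ² + λ S₀ + D` into `λ² M + λ (P S₀ Pᵀ) + V` and multiplies its determinant by
`det P ^ 2 ≠ 0`, so it suffices to stabilise `(1, S₀, D)`.

Since `det V ≠ 0`, the parity of the number of negative eigenvalues of `V` is read off the sign of
`det V`, and that sign is invariant under congruence; so `d` has an even number of negative
entries, without appealing to Sylvester's law of inertia. A nonnegative entry `d i` is stable on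
its own (`λ² = -d i`). Negative entries `-a, -b` are paired up and coupled by the gyroscopic term
`c = √a + √b`, for which `det [[λ² - a, λ c], [-λ c, λ² - b]] = (λ² + √a √b)²`.
-/

open Matrix Finset

theorem Complex.re_eq_zero_of_sq_eq_neg_ofReal {z : ℂ} {t : ℝ} (ht : 0 ≤ t)
    (h : z ^ 2 = -t) : z.re = 0 := by
  have him := congrArg Complex.im h
  have hre := congrArg Complex.re h
  simp only [sq, Complex.mul_im, Complex.mul_re, Complex.neg_re, Complex.neg_im,
    Complex.ofReal_re, Complex.ofReal_im, neg_zero] at him hre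
  rcases mul_eq_zero.mp (show z.re * z.im = 0 by linarith) with h0 | h0
  · exact h0
  · nlinarith

theorem Finset.prod_eq_neg_one_pow_card_filter_neg_mul_prod_abs {ι R : Type*} [CommRing R]
    [LinearOrder R] [IsStrictOrderedRing R] (s : Finset ι) (f : ι → R) :
    ∏ i ∈ s, f i = (-1) ^ #{i ∈ s | f i < 0} * ∏ i ∈ s, |f i| := by
  have hsign : ∀ i, f i = (if f i < 0 then -1 else 1) * |f i| := by
    intro i
    split_ifs with h
    · rw [abs_of_neg h]; ring
    · rw [abs_of_nonneg (not_lt.mp h), one_mul]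
  rw [prod_congr rfl fun i _ => hsign i, prod_mul_distrib, prod_ite, prod_const, prod_const_one,
    mul_one]

theorem Finset.prod_pos_iff_even_card_filter_neg {ι R : Type*} [CommRing R] [LinearOrder R]
    [IsStrictOrderedRing R] {s : Finset ι} {f : ι → R} (hf : ∀ i ∈ s, f i ≠ 0) :
    0 < ∏ i ∈ s, f i ↔ Even #{i ∈ s | f i < 0} := by
  rw [prod_eq_neg_one_pow_card_filter_neg_mul_prod_abs,
    mul_pos_iff_of_pos_right (prod_pos fun i hi => abs_pos.mpr (hf i hi))]
  rcases Nat.even_or_odd #{i ∈ s | f i < 0} with h | h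
  · simp [h, h.neg_one_pow]
  · simp [Nat.not_even_iff_odd.mpr h, h.neg_one_pow]

namespace Matrix

section Pencil

variable {ι κ o : Type*}

def quadraticPencil (M S V : Matrix ι ι ℝ) (lam : ℂ) : Matrix ι ι ℂ :=
  lam ^ 2 • M.map Complex.ofReal + lam • S.map Complex.ofReal + V.map Complex.ofReal

def IsSpectrallyStable [Fintype ι] [DecidableEq ι] (M S V : Matrix ι ι ℝ) : Prop :=
  ∀ lam : ℂ, (quadraticPencil M S V lam).det = 0 → lam.re = 0

theorem quadraticPencil_reindex (e : ι ≃ κ) (M S V : Matrix ι ι ℝ) (lam : ℂ) :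
    quadraticPencil (reindex e e M) (reindex e e S) (reindex e e V) lam =
      reindex e e (quadraticPencil M S V lam) := by
  ext; simp [quadraticPencil]

theorem quadraticPencil_fromBlocks (M₁ S₁ V₁ : Matrix ι ι ℝ) (M₂ S₂ V₂ : Matrix κ κ ℝ) (lam : ℂ) :
    quadraticPencil (fromBlocks M₁ 0 0 M₂) (fromBlocks S₁ 0 0 S₂) (fromBlocks V₁ 0 0 V₂) lam =
      fromBlocks (quadraticPencil M₁ S₁ V₁ lam) 0 0 (quadraticPencil M₂ S₂ V₂ lam) := by
  simp [quadraticPencil, fromBlocks_map, fromBlocks_smul, fromBlocks_add]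

theorem quadraticPencil_blockDiagonal [DecidableEq o] (M S V : o → Matrix ι ι ℝ) (lam : ℂ) :
    quadraticPencil (blockDiagonal M) (blockDiagonal S) (blockDiagonal V) lam =
      blockDiagonal fun k => quadraticPencil (M k) (S k) (V k) lam := by
  ext ⟨i, k⟩ ⟨j, k'⟩
  by_cases hk : k = k' <;> simp [quadraticPencil, blockDiagonal_apply, hk]

theorem map_ofReal_mul [Fintype ι] (A B : Matrix ι ι ℝ) :
    (A * B).map Complex.ofReal = A.map Complex.ofReal * B.map Complex.ofReal :=
  Matrix.map_mul (f := Complex.ofRealHom)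

theorem det_map_ofReal [Fintype ι] [DecidableEq ι] (A : Matrix ι ι ℝ) :
    (A.map Complex.ofReal).det = A.det :=
  (RingHom.map_det Complex.ofRealHom A).symm

theorem quadraticPencil_mul_mul_transpose [Fintype ι] (P M S V : Matrix ι ι ℝ) (lam : ℂ) :
    quadraticPencil (P * M * Pᵀ) (P * S * Pᵀ) (P * V * Pᵀ) lam =
      P.map Complex.ofReal * quadraticPencil M S V lam * (P.map Complex.ofReal)ᵀ := by
  simp only [quadraticPencil, map_ofReal_mul, ← transpose_map, Matrix.mul_add, Matrix.add_mul,
    mul_smul_comm, smul_mul_assoc]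

theorem quadraticPencil_one_zero_diagonal [DecidableEq ι] (d : ι → ℝ) (lam : ℂ) :
    quadraticPencil 1 0 (diagonal d) lam = diagonal fun i => lam ^ 2 + d i := by
  ext i j
  by_cases h : i = j <;> simp [quadraticPencil, h]

theorem quadraticPencil_fin_two (c p q : ℝ) (lam : ℂ) :
    quadraticPencil 1 !![0, c; -c, 0] (diagonal ![p, q]) lam =
      !![lam ^ 2 + p, lam * c; -(lam * c), lam ^ 2 + q] := by
  ext i j
  fin_cases i <;> fin_cases j <;> simp [quadraticPencil]

end Pencil

namespace IsSpectrallyStable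

variable {ι κ o : Type*} [Fintype ι] [DecidableEq ι] [Fintype κ] [DecidableEq κ]

theorem reindex {M S V : Matrix ι ι ℝ} (h : IsSpectrallyStable M S V) (e : ι ≃ κ) :
    IsSpectrallyStable (reindex e e M) (reindex e e S) (reindex e e V) := by
  intro lam hlam
  rw [quadraticPencil_reindex, det_reindex_self] at hlam
  exact h lam hlam

theorem fromBlocks {M₁ S₁ V₁ : Matrix ι ι ℝ} {M₂ S₂ V₂ : Matrix κ κ ℝ}
    (h₁ : IsSpectrallyStable M₁ S₁ V₁) (h₂ : IsSpectrallyStable M₂ S₂ V₂) :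
    IsSpectrallyStable (fromBlocks M₁ 0 0 M₂) (fromBlocks S₁ 0 0 S₂) (fromBlocks V₁ 0 0 V₂) := by
  intro lam hlam
  rw [quadraticPencil_fromBlocks, det_fromBlocks_zero₁₂, mul_eq_zero] at hlam
  exact hlam.elim (h₁ lam) (h₂ lam)

theorem blockDiagonal [Fintype o] [DecidableEq o] {M S V : o → Matrix ι ι ℝ}
    (h : ∀ k, IsSpectrallyStable (M k) (S k) (V k)) :
    IsSpectrallyStable (blockDiagonal M) (blockDiagonal S) (blockDiagonal V) := by
  intro lam hlam
  rw [quadraticPencil_blockDiagonal, det_blockDiagonal, prod_eq_zero_iff] at hlam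
  obtain ⟨k, -, hk⟩ := hlam
  exact h k lam hk

theorem mul_mul_transpose {M S V : Matrix ι ι ℝ} (h : IsSpectrallyStable M S V)
    {P : Matrix ι ι ℝ} (hP : IsUnit P.det) :
    IsSpectrallyStable (P * M * Pᵀ) (P * S * Pᵀ) (P * V * Pᵀ) := by
  intro lam hlam
  have hP' : (P.det : ℂ) ≠ 0 := Complex.ofReal_ne_zero.mpr hP.ne_zero
  rw [quadraticPencil_mul_mul_transpose, det_mul, det_mul, det_transpose, det_map_ofReal,
    mul_eq_zero, mul_eq_zero] at hlam
  exact h lam (hlam.resolve_right hP' |>.resolve_left hP')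

end IsSpectrallyStable

variable {ι : Type*} [Fintype ι] [DecidableEq ι]

theorem isSpectrallyStable_one_zero_diagonal {d : ι → ℝ} (hd : 0 ≤ d) :
    IsSpectrallyStable 1 0 (diagonal d) := by
  intro lam hlam
  rw [quadraticPencil_one_zero_diagonal, det_diagonal, prod_eq_zero_iff] at hlam
  obtain ⟨i, -, hi⟩ := hlam
  exact Complex.re_eq_zero_of_sq_eq_neg_ofReal (hd i) (eq_neg_of_add_eq_zero_left hi)

noncomputable def gyroscopicBlock (a b : ℝ) : Matrix (Fin 2) (Fin 2) ℝ :=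
  !![0, √a + √b; -(√a + √b), 0]

theorem gyroscopicBlock_transpose (a b : ℝ) : (gyroscopicBlock a b)ᵀ = -gyroscopicBlock a b := by
  ext i j
  fin_cases i <;> fin_cases j <;> simp [gyroscopicBlock]

theorem isSpectrallyStable_gyroscopicBlock {a b : ℝ} (ha : 0 ≤ a) (hb : 0 ≤ b) :
    IsSpectrallyStable 1 (gyroscopicBlock a b) (diagonal ![-a, -b]) := by
  intro lam hlam
  have hsa : ((√a : ℝ) : ℂ) ^ 2 = a := by norm_cast; exact Real.sq_sqrt ha
  have hsb : ((√b : ℝ) : ℂ) ^ 2 = b := by norm_cast; exact Real.sq_sqrt hb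
  have hdet : (lam ^ 2 + (-a : ℝ)) * (lam ^ 2 + (-b : ℝ)) -
      lam * (√a + √b : ℝ) * -(lam * (√a + √b : ℝ)) = (lam ^ 2 + (√a * √b : ℝ)) ^ 2 := by
    push_cast
    linear_combination (lam ^ 2 - (√b : ℂ) ^ 2) * hsa + (lam ^ 2 - a) * hsb
  rw [gyroscopicBlock, quadraticPencil_fin_two, det_fin_two_of, hdet, sq_eq_zero_iff,
    add_eq_zero_iff_eq_neg] at hlam
  exact Complex.re_eq_zero_of_sq_eq_neg_ofReal (by positivity) hlam

theorem exists_skew_isSpectrallyStable_one_diagonal (d : ι → ℝ) (heven : Even #{i | d i < 0}) :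
    ∃ S : Matrix ι ι ℝ, Sᵀ = -S ∧ IsSpectrallyStable 1 S (diagonal d) := by
  obtain ⟨m, hm⟩ := heven
  have hcard : Fintype.card (Fin 2 × Fin m) = Fintype.card {i // d i < 0} := by
    rw [Fintype.card_subtype, hm, Fintype.card_prod, Fintype.card_fin, Fintype.card_fin, two_mul]
  let e := Fintype.equivOfCardEq hcard
  -- `E` lists the negative entries of `d` in pairs `(0, j), (1, j)`, then the nonnegative ones.
  let E : (Fin 2 × Fin m) ⊕ {i // ¬d i < 0} ≃ ι :=
    (e.sumCongr (Equiv.refl _)).trans (Equiv.sumCompl _)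
  let a : Fin m → ℝ := fun j => -d (e (0, j))
  let b : Fin m → ℝ := fun j => -d (e (1, j))
  have hstable := ((IsSpectrallyStable.blockDiagonal fun j =>
    isSpectrallyStable_gyroscopicBlock (neg_nonneg.mpr (e (0, j)).2.le)
      (neg_nonneg.mpr (e (1, j)).2.le)).fromBlocks
    (isSpectrallyStable_one_zero_diagonal fun i : {i // ¬d i < 0} => not_lt.mp i.2)).reindex E
  have hone : reindex E E (fromBlocks (blockDiagonal fun _ => 1) 0 0 1) = (1 : Matrix ι ι ℝ) := by
    rw [← Pi.one_def, blockDiagonal_one, fromBlocks_one, reindex_apply, submatrix_one_equiv]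
  have hdiag : reindex E E (fromBlocks (blockDiagonal fun j => diagonal ![-a j, -b j]) 0 0
      (diagonal fun i : {i // ¬d i < 0} => d i)) = diagonal d := by
    rw [blockDiagonal_diagonal, fromBlocks_diagonal, reindex_apply, submatrix_diagonal_equiv]
    congr 1
    funext i
    obtain ⟨⟨x, j⟩ | k, rfl⟩ := E.surjective i
    · fin_cases x <;> simp [a, b, E]
    · simp [E]
  rw [hone, hdiag] at hstable
  let S₀ := fromBlocks (blockDiagonal fun j => gyroscopicBlock (a j) (b j)) 0 0
    (0 : Matrix {i // ¬d i < 0} {i // ¬d i < 0} ℝ)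
  have hS₀ : S₀ᵀ = -S₀ := by
    simp only [S₀, fromBlocks_transpose, blockDiagonal_transpose, gyroscopicBlock_transpose,
      transpose_zero, fromBlocks_neg, neg_zero]
    rw [← blockDiagonal_neg]; rfl
  refine ⟨reindex E E S₀, ?_, hstable⟩
  rw [transpose_reindex, hS₀]
  rfl

theorem IsHermitian.exists_orthogonal_diagonalization {V : Matrix ι ι ℝ} (hV : V.IsHermitian) :
    ∃ (U : Matrix ι ι ℝ) (d : ι → ℝ), U * Uᵀ = 1 ∧ V = U * diagonal d * Uᵀ := by
  refine ⟨hV.eigenvectorUnitary, hV.eigenvalues, ?_, ?_⟩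
  · simpa [star_eq_conjTranspose] using (mem_unitaryGroup_iff.mp hV.eigenvectorUnitary.2)
  · simpa [star_eq_conjTranspose, Unitary.conjStarAlgAut_apply] using hV.spectral_theorem

open scoped MatrixOrder in
theorem PosDef.exists_eq_mul_transpose_and_diagonal {M V : Matrix ι ι ℝ} (hM : M.PosDef)
    (hV : V.IsHermitian) :
    ∃ (P : Matrix ι ι ℝ) (d : ι → ℝ), IsUnit P.det ∧ M = P * Pᵀ ∧ V = P * diagonal d * Pᵀ := by
  set L := CFC.sqrt M
  have hLL : L * L = M := CFC.sqrt_mul_sqrt_self M hM.posSemidef.nonneg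
  have hLT : Lᵀ = L := by
    rw [← conjTranspose_eq_transpose_of_trivial]; exact (CFC.sqrt_nonneg M).posSemidef.1
  have hL : IsUnit L.det :=
    (isUnit_iff_isUnit_det L).mp (isUnit_of_mul_isUnit_left (hLL ▸ hM.isUnit))
  have hV₁ : (L⁻¹ * V * L⁻¹).IsHermitian := by
    rw [IsHermitian, conjTranspose_eq_transpose_of_trivial, transpose_mul, transpose_mul,
      transpose_nonsing_inv, hLT, ← conjTranspose_eq_transpose_of_trivial V, hV.eq, mul_assoc]
  obtain ⟨U, d, hU, hV₁U⟩ := hV₁.exists_orthogonal_diagonalization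
  refine ⟨L * U, d, ?_, ?_, ?_⟩
  · rw [det_mul]; exact hL.mul (isUnit_det_of_right_inverse hU)
  · rw [transpose_mul, hLT, mul_assoc, ← mul_assoc U, hU, one_mul, hLL]
  · calc V = L * (L⁻¹ * V * L⁻¹) * L := by
          simp only [← mul_assoc, mul_nonsing_inv _ hL, one_mul]
          rw [mul_assoc, nonsing_inv_mul _ hL, mul_one]
      _ = L * U * diagonal d * (L * U)ᵀ := by
          rw [hV₁U, transpose_mul, hLT]; simp only [mul_assoc]

theorem IsHermitian.even_card_neg_eigenvalues_iff_det_pos {V : Matrix ι ι ℝ} (hV : V.IsHermitian)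
    (hdet : V.det ≠ 0) : Even #{i | hV.eigenvalues i < 0} ↔ 0 < V.det := by
  have hprod : V.det = ∏ i, hV.eigenvalues i := by simpa using hV.det_eq_prod_eigenvalues
  rw [hprod] at hdet ⊢
  exact (prod_pos_iff_even_card_filter_neg fun i hi => prod_ne_zero_iff.mp hdet i hi).symm

end Matrix

/-- If V is symmetric, invertible, and has an even number of negative eigenvalues
(with multiplicity), then there is a skew-symmetric S such that every complex root λ
of det(λ²M + λS + V) = 0 is purely imaginary: the Chetaev system Mq̈ + Sq̇ + Vq = 0
can be gyroscopically (spectrally) stabilized. -/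
theorem stmt3 {n : ℕ} (M V : Matrix (Fin n) (Fin n) ℝ)
    (hM : M.PosDef) (hV : V.IsHermitian) (hVdet : V.det ≠ 0)
    (heven : Even (Finset.univ.filter fun i => hV.eigenvalues i < 0).card) :
    ∃ S : Matrix (Fin n) (Fin n) ℝ, Sᵀ = -S ∧
      ∀ lam : ℂ,
        (lam ^ 2 • M.map Complex.ofReal + lam • S.map Complex.ofReal +
          V.map Complex.ofReal).det = 0 → lam.re = 0 := by
  obtain ⟨P, d, hP, hMP, hVP⟩ := hM.exists_eq_mul_transpose_and_diagonal hV
  have hdetV : V.det = P.det ^ 2 * ∏ i, d i := by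
    rw [hVP, det_mul, det_mul, det_transpose, det_diagonal]; ring
  have hd : ∀ i ∈ univ, d i ≠ 0 := by
    rw [hdetV] at hVdet
    exact prod_ne_zero_iff.mp (right_ne_zero_of_mul hVdet)
  have hd_even : Even #{i | d i < 0} := by
    rw [← prod_pos_iff_even_card_filter_neg hd]
    have hVpos := (hV.even_card_neg_eigenvalues_iff_det_pos hVdet).mp heven
    rw [hdetV] at hVpos
    exact pos_of_mul_pos_right hVpos (sq_nonneg _)
  obtain ⟨S, hS, hstable⟩ := exists_skew_isSpectrallyStable_one_diagonal d hd_even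
  refine ⟨P * S * Pᵀ, ?_, ?_⟩
  · rw [transpose_mul, transpose_mul, transpose_transpose, hS, Matrix.neg_mul, Matrix.mul_neg,
      mul_assoc]
  · have := hstable.mul_mul_transpose hP
    rwa [mul_one, ← hMP, ← hVP] at this
end

section
/- Consider the isotropic planar gyroscopic oscillator with Rayleigh dissipation: ẍ − Bẏ + εẋ + αx = 0, ÿ + Bẋ + εẏ + αy = 0, written as a first-order system ż = A_ε z on ℝ⁴ with z = (x, y, ẋ, ẏ). If α < 0 and B² + 4α > 0 (so that the undamped system ε = 0 is gyroscopically stable), then for every ε > 0 the matrix A_ε has an eigenvalue λ ∈ ℂ with strictly positive real part. -/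
/-!
The characteristic polynomial of `A_ε` factors over `ℂ` as
`(λ² + (ε + iB) λ + α) (λ² + (ε − iB) λ + α)`. The two roots of the first factor have
product `α < 0`, so `λ₂ = α λ̄₁ / |λ₁|²` and their real parts have opposite signs or
both vanish; they cannot both vanish because they sum to `-ε ≠ 0`.
-/

/-- The 4×4 matrix of the isotropic planar gyroscopic oscillator with Rayleigh
dissipation: ẍ − Bẏ + εẋ + αx = 0, ÿ + Bẋ + εẏ + αy = 0, written as a first-order
system ż = A_ε z with z = (x, y, ẋ, ẏ). -/
noncomputable def gyroDissA (α B ε : ℝ) : Matrix (Fin 4) (Fin 4) ℝ :=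
  !![0, 0, 1, 0;
     0, 0, 0, 1;
     -α, 0, -ε, B;
     0, -α, -B, -ε]

open Complex

theorem Complex.re_pos_or_re_pos_of_mul_eq_neg {z w : ℂ} {d : ℝ} (hd : d < 0)
    (hzw : z * w = d) (hsum : (z + w).re ≠ 0) : 0 < z.re ∨ 0 < w.re := by
  have hz : z ≠ 0 := by
    rintro rfl
    simp only [zero_mul] at hzw
    exact hd.ne (ofReal_eq_zero.mp hzw.symm)
  have hnormSq : 0 < normSq z := normSq_pos.mpr hz
  have key : w.re * normSq z = d * z.re := by
    have : w * (normSq z : ℂ) = d * (starRingEnd ℂ) z := by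
      rw [← hzw, ← mul_conj]; ring
    simpa using congrArg re this
  rw [add_re] at hsum
  rcases lt_trichotomy z.re 0 with hneg | hzero | hpos
  · have : 0 < w.re * normSq z := key ▸ mul_pos_of_neg_of_neg hd hneg
    exact Or.inr (pos_of_mul_pos_left this hnormSq.le)
  · rw [hzero, mul_zero] at key
    have hw : w.re = 0 := (mul_eq_zero.mp key).resolve_right hnormSq.ne'
    exact (hsum (by rw [hzero, hw, add_zero])).elim
  · exact Or.inl hpos

theorem Complex.exists_quadratic_eq_zero_re_pos (c : ℂ) {d : ℝ} (hd : d < 0) (hc : c.re ≠ 0) :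
    ∃ z : ℂ, z ^ 2 + c * z + d = 0 ∧ 0 < z.re := by
  obtain ⟨s, hs⟩ := IsAlgClosed.exists_eq_mul_self (c ^ 2 - 4 * d)
  have hsum : (-c + s) / 2 + (-c - s) / 2 = -c := by ring
  have hprod : (-c + s) / 2 * ((-c - s) / 2) = d := by linear_combination (1 / 4 : ℂ) * hs
  have hroot : ∀ z w : ℂ, z + w = -c → z * w = d → z ^ 2 + c * z + d = 0 := by
    intro z w hzw_add hzw_mul
    linear_combination z * hzw_add - hzw_mul
  have hre : ((-c + s) / 2 + (-c - s) / 2).re ≠ 0 := by rwa [hsum, neg_re, neg_ne_zero]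
  rcases re_pos_or_re_pos_of_mul_eq_neg hd hprod hre with h | h
  · exact ⟨_, hroot _ _ hsum hprod, h⟩
  · exact ⟨_, hroot _ _ (by rw [add_comm, hsum]) (by rw [mul_comm, hprod]), h⟩

theorem det_smul_one_sub_gyroDissA (α B ε : ℝ) (lam : ℂ) :
    (lam • (1 : Matrix (Fin 4) (Fin 4) ℂ) - (gyroDissA α B ε).map ofReal).det =
      (lam ^ 2 + (ε + B * I) * lam + α) * (lam ^ 2 + (ε - B * I) * lam + α) := by
  have hM : lam • (1 : Matrix (Fin 4) (Fin 4) ℂ) - (gyroDissA α B ε).map ofReal =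
      !![lam, 0, -1, 0; 0, lam, 0, -1; (α : ℂ), 0, lam + ε, -B; 0, (α : ℂ), (B : ℂ), lam + ε] := by
    ext i j
    fin_cases i <;> fin_cases j <;> simp [gyroDissA]
  rw [hM]
  simp [Matrix.det_succ_row_zero, Fin.sum_univ_succ, Fin.succAbove]
  linear_combination ((B : ℂ) ^ 2 * lam ^ 2) * I_sq

theorem stmt5_general (α B : ℝ) (hα : α < 0) :
    ∀ ε : ℝ, 0 < ε →
      ∃ lam : ℂ,
        (lam • (1 : Matrix (Fin 4) (Fin 4) ℂ) - (gyroDissA α B ε).map Complex.ofReal).det = 0 ∧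
        0 < lam.re := by
  intro ε hε
  obtain ⟨lam, hroot, hre⟩ :=
    exists_quadratic_eq_zero_re_pos ((ε : ℂ) + B * I) hα (by simpa using hε.ne')
  exact ⟨lam, by rw [det_smul_one_sub_gyroDissA, hroot, zero_mul], hre⟩

/-- Dissipation-induced instability for the isotropic planar gyroscopic oscillator:
if α < 0 and B² + 4α > 0, then for every ε > 0 the matrix A_ε has an eigenvalue
with strictly positive real part. -/
theorem stmt5 (α B : ℝ) (hα : α < 0) (hB : 0 < B ^ 2 + 4 * α) :
    ∀ ε : ℝ, 0 < ε →
      ∃ lam : ℂ,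
        (lam • (1 : Matrix (Fin 4) (Fin 4) ℂ) - (gyroDissA α B ε).map Complex.ofReal).det = 0 ∧
        0 < lam.re :=
  stmt5_general α B hα
end

section
/- Reduction to the characteristic equation: Consider the isotropic oscillator–bath system ẍ − Bẏ + αx = Σⱼ mⱼωⱼ²(xⱼ−x), ÿ + Bẋ + αy = Σⱼ mⱼωⱼ²(yⱼ−y), ẍⱼ + ωⱼ²xⱼ = ωⱼ²x, ÿⱼ + ωⱼ²yⱼ = ωⱼ²y (j = 1,…,N), with mⱼ > 0 and 0 < ω₁ < ⋯ < ω_N, written as a first-order system ż = Az on ℝ^{4N+4}. For every real ω with ω² ≠ ωⱼ² for all j, the purely imaginary number iω is an eigenvalue of A if and only if there exists a sign s ∈ {+1, −1} such that (ω + sB/2)² − (α + B²/4) = Σⱼ mⱼωⱼ²ω²/(ω² − ωⱼ²). -/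
/-!
A kernel vector of `I w - A` has every velocity equal to `I w` times the corresponding position,
and the equation of bath oscillator `k` then forces its position to be `ωₖ² / (ωₖ² - w²)` times
the matching central coordinate. Substituting this into the two central equations leaves a
`2 × 2` system with matrix `[[a, -I w B], [I w B, a]]`, where
`a = α - w² + ∑ⱼ mⱼ ωⱼ² w² / (w² - ωⱼ²)`. Its determinant `a² - (w B)²` vanishes iff `a = s w B`
for a sign `s`, and `a = s w B` is the characteristic equation rearranged using `s² = 1`.
-/

open Matrix

/-- Index type for the oscillator–bath first-order system: the first four
coordinates are (x, y, ẋ, ẏ) and, for each bath oscillator j, the four coordinates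
are (xⱼ, yⱼ, ẋⱼ, ẏⱼ). -/
abbrev BathIdx (N : ℕ) := Fin 4 ⊕ Fin N × Fin 4

/-- The (4N+4)×(4N+4) matrix A of the isotropic oscillator–bath system
ẍ − Bẏ + αx = Σⱼ mⱼωⱼ²(xⱼ−x), ÿ + Bẋ + αy = Σⱼ mⱼωⱼ²(yⱼ−y),
ẍⱼ + ωⱼ²xⱼ = ωⱼ²x, ÿⱼ + ωⱼ²yⱼ = ωⱼ²y, written as ż = Az with
z = (x, y, ẋ, ẏ, x₁, y₁, ẋ₁, ẏ₁, …). -/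
noncomputable def bathA (N : ℕ) (α B : ℝ) (m ω : Fin N → ℝ) :
    Matrix (BathIdx N) (BathIdx N) ℝ :=
  Matrix.of fun i j =>
    match i, j with
    | .inl 0, .inl 2 => 1
    | .inl 1, .inl 3 => 1
    | .inl 2, .inl 0 => -(α + ∑ k, m k * ω k ^ 2)
    | .inl 2, .inl 3 => B
    | .inl 2, .inr (k, 0) => m k * ω k ^ 2
    | .inl 3, .inl 1 => -(α + ∑ k, m k * ω k ^ 2)
    | .inl 3, .inl 2 => -B
    | .inl 3, .inr (k, 1) => m k * ω k ^ 2
    | .inr (k, 0), .inr (k', 2) => if k = k' then 1 else 0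
    | .inr (k, 1), .inr (k', 3) => if k = k' then 1 else 0
    | .inr (k, 2), .inl 0 => ω k ^ 2
    | .inr (k, 2), .inr (k', 0) => if k = k' then -(ω k ^ 2) else 0
    | .inr (k, 3), .inl 1 => ω k ^ 2
    | .inr (k, 3), .inr (k', 1) => if k = k' then -(ω k ^ 2) else 0
    | _, _ => 0

open Complex

namespace BathA

variable {N : ℕ} (α B : ℝ) (m ω : Fin N → ℝ) (w : ℝ)

noncomputable def shiftedMatrix : Matrix (BathIdx N) (BathIdx N) ℂ :=
  (I * w) • (1 : Matrix (BathIdx N) (BathIdx N) ℂ) - (bathA N α B m ω).map ofReal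

section Rows

variable (v : BathIdx N → ℂ)

lemma shiftedMatrix_mulVec_inl_zero :
    (shiftedMatrix α B m ω w *ᵥ v) (.inl 0) = I * w * v (.inl 0) - v (.inl 2) := by
  simp [shiftedMatrix, mulVec, dotProduct, Fintype.sum_sum_type, Fin.sum_univ_four, bathA,
    one_apply]
  ring

lemma shiftedMatrix_mulVec_inl_one :
    (shiftedMatrix α B m ω w *ᵥ v) (.inl 1) = I * w * v (.inl 1) - v (.inl 3) := by
  simp [shiftedMatrix, mulVec, dotProduct, Fintype.sum_sum_type, Fin.sum_univ_four, bathA,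
    one_apply]
  ring

lemma shiftedMatrix_mulVec_inl_two :
    (shiftedMatrix α B m ω w *ᵥ v) (.inl 2) =
      I * w * v (.inl 2) + (α + ∑ k, (m k : ℂ) * ω k ^ 2) * v (.inl 0) - B * v (.inl 3)
        - ∑ k, (m k : ℂ) * ω k ^ 2 * v (.inr (k, 0)) := by
  simp [shiftedMatrix, mulVec, dotProduct, Fintype.sum_sum_type, Fintype.sum_prod_type,
    Fin.sum_univ_four, bathA, one_apply]
  ring

lemma shiftedMatrix_mulVec_inl_three :
    (shiftedMatrix α B m ω w *ᵥ v) (.inl 3) =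
      I * w * v (.inl 3) + (α + ∑ k, (m k : ℂ) * ω k ^ 2) * v (.inl 1) + B * v (.inl 2)
        - ∑ k, (m k : ℂ) * ω k ^ 2 * v (.inr (k, 1)) := by
  simp [shiftedMatrix, mulVec, dotProduct, Fintype.sum_sum_type, Fintype.sum_prod_type,
    Fin.sum_univ_four, bathA, one_apply]
  ring

lemma shiftedMatrix_mulVec_inr_zero (k : Fin N) :
    (shiftedMatrix α B m ω w *ᵥ v) (.inr (k, 0)) = I * w * v (.inr (k, 0)) - v (.inr (k, 2)) := by
  simp [shiftedMatrix, mulVec, dotProduct, Fintype.sum_sum_type, Fintype.sum_prod_type,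
    Fin.sum_univ_four, bathA, one_apply, apply_ite ofReal, Finset.sum_add_distrib]
  ring

lemma shiftedMatrix_mulVec_inr_one (k : Fin N) :
    (shiftedMatrix α B m ω w *ᵥ v) (.inr (k, 1)) = I * w * v (.inr (k, 1)) - v (.inr (k, 3)) := by
  simp [shiftedMatrix, mulVec, dotProduct, Fintype.sum_sum_type, Fintype.sum_prod_type,
    Fin.sum_univ_four, bathA, one_apply, apply_ite ofReal, Finset.sum_add_distrib]
  ring

lemma shiftedMatrix_mulVec_inr_two (k : Fin N) :
    (shiftedMatrix α B m ω w *ᵥ v) (.inr (k, 2)) =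
      I * w * v (.inr (k, 2)) - ω k ^ 2 * v (.inl 0) + ω k ^ 2 * v (.inr (k, 0)) := by
  simp [shiftedMatrix, mulVec, dotProduct, Fintype.sum_sum_type, Fintype.sum_prod_type,
    Fin.sum_univ_four, bathA, one_apply, apply_ite ofReal, Finset.sum_add_distrib]
  ring

lemma shiftedMatrix_mulVec_inr_three (k : Fin N) :
    (shiftedMatrix α B m ω w *ᵥ v) (.inr (k, 3)) =
      I * w * v (.inr (k, 3)) - ω k ^ 2 * v (.inl 1) + ω k ^ 2 * v (.inr (k, 1)) := by
  simp [shiftedMatrix, mulVec, dotProduct, Fintype.sum_sum_type, Fintype.sum_prod_type,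
    Fin.sum_univ_four, bathA, one_apply, apply_ite ofReal, Finset.sum_add_distrib]
  ring

end Rows

noncomputable def response (k : Fin N) : ℝ := ω k ^ 2 / (ω k ^ 2 - w ^ 2)

noncomputable def mode (p : Fin 2 → ℂ) : BathIdx N → ℂ
  | .inl 0 => p 0
  | .inl 1 => p 1
  | .inl 2 => I * w * p 0
  | .inl 3 => I * w * p 1
  | .inr (k, 0) => response ω w k * p 0
  | .inr (k, 1) => response ω w k * p 1
  | .inr (k, 2) => I * w * (response ω w k * p 0)
  | .inr (k, 3) => I * w * (response ω w k * p 1)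

noncomputable def effectiveStiffness : ℝ :=
  α - w ^ 2 + ∑ j, m j * ω j ^ 2 * w ^ 2 / (w ^ 2 - ω j ^ 2)

noncomputable def reducedMatrix : Matrix (Fin 2) (Fin 2) ℂ :=
  !![(effectiveStiffness α m ω w : ℂ), -(I * (w * B)); I * (w * B), effectiveStiffness α m ω w]

variable {α B m ω w}

lemma ofReal_sq_sub_sq_ne_zero (hw : ∀ k, w ^ 2 ≠ ω k ^ 2) (k : Fin N) :
    (ω k : ℂ) ^ 2 - w ^ 2 ≠ 0 := by
  exact_mod_cast sub_ne_zero.mpr (hw k).symm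

lemma ofReal_response (hw : ∀ k, w ^ 2 ≠ ω k ^ 2) (k : Fin N) :
    ((ω k : ℂ) ^ 2 - w ^ 2) * response ω w k = ω k ^ 2 := by
  have := ofReal_sq_sub_sq_ne_zero hw k
  rw [response]
  push_cast
  field_simp

lemma sum_mul_response (hw : ∀ k, w ^ 2 ≠ ω k ^ 2) :
    ∑ k, m k * ω k ^ 2 * response ω w k =
      ∑ k, m k * ω k ^ 2 - ∑ j, m j * ω j ^ 2 * w ^ 2 / (w ^ 2 - ω j ^ 2) := by
  rw [← Finset.sum_sub_distrib]
  refine Finset.sum_congr rfl fun k _ => ?_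
  have hk : w ^ 2 - ω k ^ 2 ≠ 0 := sub_ne_zero.mpr (hw k)
  have hk' : ω k ^ 2 - w ^ 2 ≠ 0 := sub_ne_zero.mpr (hw k).symm
  rw [response]
  field_simp
  ring

lemma mode_eq_zero_iff (p : Fin 2 → ℂ) : mode ω w p = 0 ↔ p = 0 := by
  constructor
  · intro h
    ext i
    fin_cases i
    exacts [congrFun h (.inl 0), congrFun h (.inl 1)]
  · rintro rfl
    ext (i | ⟨k, i⟩) <;> fin_cases i <;> simp [mode]

lemma eq_mode_of_mulVec_eq_zero (hw : ∀ k, w ^ 2 ≠ ω k ^ 2) {v : BathIdx N → ℂ}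
    (hv : shiftedMatrix α B m ω w *ᵥ v = 0) : v = mode ω w ![v (.inl 0), v (.inl 1)] := by
  have row (i : BathIdx N) : (shiftedMatrix α B m ω w *ᵥ v) i = 0 := congrFun hv i
  have h0 := row (.inl 0)
  have h1 := row (.inl 1)
  have hk0 (k : Fin N) := row (.inr (k, 0))
  have hk1 (k : Fin N) := row (.inr (k, 1))
  have hk2 (k : Fin N) := row (.inr (k, 2))
  have hk3 (k : Fin N) := row (.inr (k, 3))
  simp only [shiftedMatrix_mulVec_inl_zero, shiftedMatrix_mulVec_inl_one,
    shiftedMatrix_mulVec_inr_zero, shiftedMatrix_mulVec_inr_one, shiftedMatrix_mulVec_inr_two,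
    shiftedMatrix_mulVec_inr_three] at h0 h1 hk0 hk1 hk2 hk3
  have position {x x' q : ℂ} {k : Fin N} (h : I * w * x - x' = 0)
      (h' : I * w * x' - ω k ^ 2 * q + ω k ^ 2 * x = 0) : x = response ω w k * q := by
    refine mul_left_cancel₀ (ofReal_sq_sub_sq_ne_zero hw k) ?_
    linear_combination I * w * h + h' - w ^ 2 * x * I_sq - q * ofReal_response hw k
  ext (i | ⟨k, i⟩) <;> fin_cases i
  all_goals simp only [Fin.reduceFinMk, mode, cons_val_zero, cons_val_one]
  · linear_combination -h0
  · linear_combination -h1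
  · exact position (hk0 k) (hk2 k)
  · exact position (hk1 k) (hk3 k)
  · rw [← position (hk0 k) (hk2 k)]
    linear_combination -hk0 k
  · rw [← position (hk1 k) (hk3 k)]
    linear_combination -hk1 k

lemma shiftedMatrix_mulVec_mode (hw : ∀ k, w ^ 2 ≠ ω k ^ 2) (p : Fin 2 → ℂ) :
    shiftedMatrix α B m ω w *ᵥ mode ω w p =
      Sum.elim ![0, 0, (reducedMatrix α B m ω w *ᵥ p) 0, (reducedMatrix α B m ω w *ᵥ p) 1] 0 := by
  have hsum (q : ℂ) : ∑ k, (m k : ℂ) * ω k ^ 2 * (response ω w k * q) =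
      ((∑ k, m k * ω k ^ 2 - ∑ j, m j * ω j ^ 2 * w ^ 2 / (w ^ 2 - ω j ^ 2) : ℝ) : ℂ) * q := by
    rw [← sum_mul_response hw, ofReal_sum, Finset.sum_mul]
    push_cast
    exact Finset.sum_congr rfl fun k _ => by ring
  ext (i | ⟨k, i⟩) <;> fin_cases i
  all_goals simp only [Fin.reduceFinMk, shiftedMatrix_mulVec_inl_zero, shiftedMatrix_mulVec_inl_one,
    shiftedMatrix_mulVec_inl_two, shiftedMatrix_mulVec_inl_three,
    shiftedMatrix_mulVec_inr_zero, shiftedMatrix_mulVec_inr_one, shiftedMatrix_mulVec_inr_two,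
    shiftedMatrix_mulVec_inr_three]
  all_goals simp only [mode, reducedMatrix, mulVec, dotProduct, Fin.sum_univ_two, Sum.elim_inl,
    Sum.elim_inr, Pi.zero_apply, cons_val_zero, cons_val_one, cons_val, of_apply]
  · ring
  · ring
  · rw [hsum, effectiveStiffness]
    push_cast
    linear_combination w ^ 2 * p 0 * I_sq
  · rw [hsum, effectiveStiffness]
    push_cast
    linear_combination w ^ 2 * p 1 * I_sq
  · ring
  · ring
  · linear_combination p 0 * ofReal_response hw k + w ^ 2 * response ω w k * p 0 * I_sq
  · linear_combination p 1 * ofReal_response hw k + w ^ 2 * response ω w k * p 1 * I_sq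

lemma shiftedMatrix_mulVec_mode_eq_zero_iff (hw : ∀ k, w ^ 2 ≠ ω k ^ 2) (p : Fin 2 → ℂ) :
    shiftedMatrix α B m ω w *ᵥ mode ω w p = 0 ↔ reducedMatrix α B m ω w *ᵥ p = 0 := by
  rw [shiftedMatrix_mulVec_mode hw]
  constructor
  · intro h
    ext i
    fin_cases i
    exacts [congrFun h (.inl 2), congrFun h (.inl 3)]
  · intro h
    ext (i | i)
    · fin_cases i <;> simp [h]
    · rfl

lemma det_shiftedMatrix_eq_zero_iff (hw : ∀ k, w ^ 2 ≠ ω k ^ 2) :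
    (shiftedMatrix α B m ω w).det = 0 ↔ (reducedMatrix α B m ω w).det = 0 := by
  rw [← exists_mulVec_eq_zero_iff, ← exists_mulVec_eq_zero_iff]
  constructor
  · rintro ⟨v, hv0, hv⟩
    rw [eq_mode_of_mulVec_eq_zero hw hv] at hv0 hv
    exact ⟨_, mt (mode_eq_zero_iff _).2 hv0, (shiftedMatrix_mulVec_mode_eq_zero_iff hw _).1 hv⟩
  · rintro ⟨p, hp0, hp⟩
    exact ⟨mode ω w p, mt (mode_eq_zero_iff p).1 hp0,
      (shiftedMatrix_mulVec_mode_eq_zero_iff hw p).2 hp⟩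

lemma det_reducedMatrix :
    (reducedMatrix α B m ω w).det = ((effectiveStiffness α m ω w ^ 2 - (w * B) ^ 2 : ℝ) : ℂ) := by
  rw [reducedMatrix, det_fin_two_of]
  push_cast
  linear_combination (w * B : ℂ) ^ 2 * I_sq

lemma effectiveStiffness_eq_mul_iff {s : ℝ} (hs : s ^ 2 = 1) :
    effectiveStiffness α m ω w = s * (w * B) ↔
      (w + s * B / 2) ^ 2 - (α + B ^ 2 / 4) = ∑ j, m j * ω j ^ 2 * w ^ 2 / (w ^ 2 - ω j ^ 2) := by
  rw [effectiveStiffness]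
  constructor <;> intro h <;> linear_combination (-1 : ℝ) * h + B ^ 2 / 4 * hs

end BathA

open BathA in
theorem stmt7_general (N : ℕ) (α B : ℝ) (m ω : Fin N → ℝ) :
    ∀ w : ℝ, (∀ j, w ^ 2 ≠ ω j ^ 2) →
      (((Complex.I * w) • (1 : Matrix (BathIdx N) (BathIdx N) ℂ) -
          (bathA N α B m ω).map Complex.ofReal).det = 0 ↔
        ∃ s : ℝ, (s = 1 ∨ s = -1) ∧
          (w + s * B / 2) ^ 2 - (α + B ^ 2 / 4) =
            ∑ j, m j * ω j ^ 2 * w ^ 2 / (w ^ 2 - ω j ^ 2)) := by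
  intro w hw
  change (shiftedMatrix α B m ω w).det = 0 ↔ _
  rw [det_shiftedMatrix_eq_zero_iff hw, det_reducedMatrix, ofReal_eq_zero, sub_eq_zero,
    sq_eq_sq_iff_eq_or_eq_neg]
  constructor
  · rintro (h | h)
    · exact ⟨1, .inl rfl, (effectiveStiffness_eq_mul_iff (one_pow 2)).1 (by rw [h, one_mul])⟩
    · exact ⟨-1, .inr rfl, (effectiveStiffness_eq_mul_iff (by norm_num)).1 (by rw [h]; ring)⟩
  · rintro ⟨s, rfl | rfl, h⟩
    · exact .inl (by simpa using (effectiveStiffness_eq_mul_iff (one_pow 2)).2 h)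
    · exact .inr (by simpa using (effectiveStiffness_eq_mul_iff (by norm_num)).2 h)

/-- Reduction to the characteristic equation: for real ω with ω² ≠ ωⱼ² for all j,
iω is an eigenvalue of the oscillator–bath matrix A iff for some sign s = ±1,
(ω + sB/2)² − (α + B²/4) = Σⱼ mⱼωⱼ²ω²/(ω² − ωⱼ²). -/
theorem stmt7 (N : ℕ) (α B : ℝ) (m ω : Fin N → ℝ)
    (hm : ∀ j, 0 < m j) (hω : ∀ j, 0 < ω j) (hmono : StrictMono ω) :
    ∀ w : ℝ, (∀ j, w ^ 2 ≠ ω j ^ 2) →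
      (((Complex.I * w) • (1 : Matrix (BathIdx N) (BathIdx N) ℂ) -
          (bathA N α B m ω).map Complex.ofReal).det = 0 ↔
        ∃ s : ℝ, (s = 1 ∨ s = -1) ∧
          (w + s * B / 2) ^ 2 - (α + B ^ 2 / 4) =
            ∑ j, m j * ω j ^ 2 * w ^ 2 / (w ^ 2 - ω j ^ 2)) :=
  stmt7_general N α B m ω
end

section
/- Stability of the coupled system when the uncoupled oscillator is strongly stable: Consider the isotropic oscillator–bath system with mⱼ > 0 and 0 < ω₁ < ⋯ < ω_N, written as a first-order system ż = Az on ℝ^{4N+4}. If α > 0, then every eigenvalue λ ∈ ℂ of the matrix A has real part equal to zero; i.e. coupling to the bath preserves stability. -/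
open Matrix

open Complex Finset

local notation "conj'" => starRingEnd ℂ

private lemma bA1 (N : ℕ) (α B : ℝ) (m ω : Fin N → ℝ) :
    bathA N α B m ω (.inl 0) (.inl 0) = 0 := rfl
private lemma bA2 (N : ℕ) (α B : ℝ) (m ω : Fin N → ℝ) :
    bathA N α B m ω (.inl 0) (.inl 1) = 0 := rfl
private lemma bA3 (N : ℕ) (α B : ℝ) (m ω : Fin N → ℝ) :
    bathA N α B m ω (.inl 0) (.inl 2) = 1 := rfl
private lemma bA4 (N : ℕ) (α B : ℝ) (m ω : Fin N → ℝ) :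
    bathA N α B m ω (.inl 0) (.inl 3) = 0 := rfl
private lemma bA5 (N : ℕ) (α B : ℝ) (m ω : Fin N → ℝ) (k' : Fin N) :
    bathA N α B m ω (.inl 0) (.inr (k', 0)) = 0 := rfl
private lemma bA6 (N : ℕ) (α B : ℝ) (m ω : Fin N → ℝ) (k' : Fin N) :
    bathA N α B m ω (.inl 0) (.inr (k', 1)) = 0 := rfl
private lemma bA7 (N : ℕ) (α B : ℝ) (m ω : Fin N → ℝ) (k' : Fin N) :
    bathA N α B m ω (.inl 0) (.inr (k', 2)) = 0 := rfl
private lemma bA8 (N : ℕ) (α B : ℝ) (m ω : Fin N → ℝ) (k' : Fin N) :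
    bathA N α B m ω (.inl 0) (.inr (k', 3)) = 0 := rfl
private lemma bA9 (N : ℕ) (α B : ℝ) (m ω : Fin N → ℝ) :
    bathA N α B m ω (.inl 1) (.inl 0) = 0 := rfl
private lemma bA10 (N : ℕ) (α B : ℝ) (m ω : Fin N → ℝ) :
    bathA N α B m ω (.inl 1) (.inl 1) = 0 := rfl
private lemma bA11 (N : ℕ) (α B : ℝ) (m ω : Fin N → ℝ) :
    bathA N α B m ω (.inl 1) (.inl 2) = 0 := rfl
private lemma bA12 (N : ℕ) (α B : ℝ) (m ω : Fin N → ℝ) :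
    bathA N α B m ω (.inl 1) (.inl 3) = 1 := rfl
private lemma bA13 (N : ℕ) (α B : ℝ) (m ω : Fin N → ℝ) (k' : Fin N) :
    bathA N α B m ω (.inl 1) (.inr (k', 0)) = 0 := rfl
private lemma bA14 (N : ℕ) (α B : ℝ) (m ω : Fin N → ℝ) (k' : Fin N) :
    bathA N α B m ω (.inl 1) (.inr (k', 1)) = 0 := rfl
private lemma bA15 (N : ℕ) (α B : ℝ) (m ω : Fin N → ℝ) (k' : Fin N) :
    bathA N α B m ω (.inl 1) (.inr (k', 2)) = 0 := rfl
private lemma bA16 (N : ℕ) (α B : ℝ) (m ω : Fin N → ℝ) (k' : Fin N) :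
    bathA N α B m ω (.inl 1) (.inr (k', 3)) = 0 := rfl
private lemma bA17 (N : ℕ) (α B : ℝ) (m ω : Fin N → ℝ) :
    bathA N α B m ω (.inl 2) (.inl 0) = -(α + ∑ k, m k * ω k ^ 2) := rfl
private lemma bA18 (N : ℕ) (α B : ℝ) (m ω : Fin N → ℝ) :
    bathA N α B m ω (.inl 2) (.inl 1) = 0 := rfl
private lemma bA19 (N : ℕ) (α B : ℝ) (m ω : Fin N → ℝ) :
    bathA N α B m ω (.inl 2) (.inl 2) = 0 := rfl
private lemma bA20 (N : ℕ) (α B : ℝ) (m ω : Fin N → ℝ) :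
    bathA N α B m ω (.inl 2) (.inl 3) = B := rfl
private lemma bA21 (N : ℕ) (α B : ℝ) (m ω : Fin N → ℝ) (k' : Fin N) :
    bathA N α B m ω (.inl 2) (.inr (k', 0)) = m k' * ω k' ^ 2 := rfl
private lemma bA22 (N : ℕ) (α B : ℝ) (m ω : Fin N → ℝ) (k' : Fin N) :
    bathA N α B m ω (.inl 2) (.inr (k', 1)) = 0 := rfl
private lemma bA23 (N : ℕ) (α B : ℝ) (m ω : Fin N → ℝ) (k' : Fin N) :
    bathA N α B m ω (.inl 2) (.inr (k', 2)) = 0 := rfl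
private lemma bA24 (N : ℕ) (α B : ℝ) (m ω : Fin N → ℝ) (k' : Fin N) :
    bathA N α B m ω (.inl 2) (.inr (k', 3)) = 0 := rfl
private lemma bA25 (N : ℕ) (α B : ℝ) (m ω : Fin N → ℝ) :
    bathA N α B m ω (.inl 3) (.inl 0) = 0 := rfl
private lemma bA26 (N : ℕ) (α B : ℝ) (m ω : Fin N → ℝ) :
    bathA N α B m ω (.inl 3) (.inl 1) = -(α + ∑ k, m k * ω k ^ 2) := rfl
private lemma bA27 (N : ℕ) (α B : ℝ) (m ω : Fin N → ℝ) :
    bathA N α B m ω (.inl 3) (.inl 2) = -B := rfl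
private lemma bA28 (N : ℕ) (α B : ℝ) (m ω : Fin N → ℝ) :
    bathA N α B m ω (.inl 3) (.inl 3) = 0 := rfl
private lemma bA29 (N : ℕ) (α B : ℝ) (m ω : Fin N → ℝ) (k' : Fin N) :
    bathA N α B m ω (.inl 3) (.inr (k', 0)) = 0 := rfl
private lemma bA30 (N : ℕ) (α B : ℝ) (m ω : Fin N → ℝ) (k' : Fin N) :
    bathA N α B m ω (.inl 3) (.inr (k', 1)) = m k' * ω k' ^ 2 := rfl
private lemma bA31 (N : ℕ) (α B : ℝ) (m ω : Fin N → ℝ) (k' : Fin N) :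
    bathA N α B m ω (.inl 3) (.inr (k', 2)) = 0 := rfl
private lemma bA32 (N : ℕ) (α B : ℝ) (m ω : Fin N → ℝ) (k' : Fin N) :
    bathA N α B m ω (.inl 3) (.inr (k', 3)) = 0 := rfl
private lemma bA33 (N : ℕ) (α B : ℝ) (m ω : Fin N → ℝ) (k : Fin N) :
    bathA N α B m ω (.inr (k, 0)) (.inl 0) = 0 := rfl
private lemma bA34 (N : ℕ) (α B : ℝ) (m ω : Fin N → ℝ) (k : Fin N) :
    bathA N α B m ω (.inr (k, 0)) (.inl 1) = 0 := rfl
private lemma bA35 (N : ℕ) (α B : ℝ) (m ω : Fin N → ℝ) (k : Fin N) :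
    bathA N α B m ω (.inr (k, 0)) (.inl 2) = 0 := rfl
private lemma bA36 (N : ℕ) (α B : ℝ) (m ω : Fin N → ℝ) (k : Fin N) :
    bathA N α B m ω (.inr (k, 0)) (.inl 3) = 0 := rfl
private lemma bA37 (N : ℕ) (α B : ℝ) (m ω : Fin N → ℝ) (k k' : Fin N) :
    bathA N α B m ω (.inr (k, 0)) (.inr (k', 0)) = 0 := rfl
private lemma bA38 (N : ℕ) (α B : ℝ) (m ω : Fin N → ℝ) (k k' : Fin N) :
    bathA N α B m ω (.inr (k, 0)) (.inr (k', 1)) = 0 := rfl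
private lemma bA39 (N : ℕ) (α B : ℝ) (m ω : Fin N → ℝ) (k k' : Fin N) :
    bathA N α B m ω (.inr (k, 0)) (.inr (k', 2)) = if k = k' then 1 else 0 := rfl
private lemma bA40 (N : ℕ) (α B : ℝ) (m ω : Fin N → ℝ) (k k' : Fin N) :
    bathA N α B m ω (.inr (k, 0)) (.inr (k', 3)) = 0 := rfl
private lemma bA41 (N : ℕ) (α B : ℝ) (m ω : Fin N → ℝ) (k : Fin N) :
    bathA N α B m ω (.inr (k, 1)) (.inl 0) = 0 := rfl
private lemma bA42 (N : ℕ) (α B : ℝ) (m ω : Fin N → ℝ) (k : Fin N) :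
    bathA N α B m ω (.inr (k, 1)) (.inl 1) = 0 := rfl
private lemma bA43 (N : ℕ) (α B : ℝ) (m ω : Fin N → ℝ) (k : Fin N) :
    bathA N α B m ω (.inr (k, 1)) (.inl 2) = 0 := rfl
private lemma bA44 (N : ℕ) (α B : ℝ) (m ω : Fin N → ℝ) (k : Fin N) :
    bathA N α B m ω (.inr (k, 1)) (.inl 3) = 0 := rfl
private lemma bA45 (N : ℕ) (α B : ℝ) (m ω : Fin N → ℝ) (k k' : Fin N) :
    bathA N α B m ω (.inr (k, 1)) (.inr (k', 0)) = 0 := rfl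
private lemma bA46 (N : ℕ) (α B : ℝ) (m ω : Fin N → ℝ) (k k' : Fin N) :
    bathA N α B m ω (.inr (k, 1)) (.inr (k', 1)) = 0 := rfl
private lemma bA47 (N : ℕ) (α B : ℝ) (m ω : Fin N → ℝ) (k k' : Fin N) :
    bathA N α B m ω (.inr (k, 1)) (.inr (k', 2)) = 0 := rfl
private lemma bA48 (N : ℕ) (α B : ℝ) (m ω : Fin N → ℝ) (k k' : Fin N) :
    bathA N α B m ω (.inr (k, 1)) (.inr (k', 3)) = if k = k' then 1 else 0 := rfl
private lemma bA49 (N : ℕ) (α B : ℝ) (m ω : Fin N → ℝ) (k : Fin N) :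
    bathA N α B m ω (.inr (k, 2)) (.inl 0) = ω k ^ 2 := rfl
private lemma bA50 (N : ℕ) (α B : ℝ) (m ω : Fin N → ℝ) (k : Fin N) :
    bathA N α B m ω (.inr (k, 2)) (.inl 1) = 0 := rfl
private lemma bA51 (N : ℕ) (α B : ℝ) (m ω : Fin N → ℝ) (k : Fin N) :
    bathA N α B m ω (.inr (k, 2)) (.inl 2) = 0 := rfl
private lemma bA52 (N : ℕ) (α B : ℝ) (m ω : Fin N → ℝ) (k : Fin N) :
    bathA N α B m ω (.inr (k, 2)) (.inl 3) = 0 := rfl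
private lemma bA53 (N : ℕ) (α B : ℝ) (m ω : Fin N → ℝ) (k k' : Fin N) :
    bathA N α B m ω (.inr (k, 2)) (.inr (k', 0)) = if k = k' then -(ω k ^ 2) else 0 := rfl
private lemma bA54 (N : ℕ) (α B : ℝ) (m ω : Fin N → ℝ) (k k' : Fin N) :
    bathA N α B m ω (.inr (k, 2)) (.inr (k', 1)) = 0 := rfl
private lemma bA55 (N : ℕ) (α B : ℝ) (m ω : Fin N → ℝ) (k k' : Fin N) :
    bathA N α B m ω (.inr (k, 2)) (.inr (k', 2)) = 0 := rfl
private lemma bA56 (N : ℕ) (α B : ℝ) (m ω : Fin N → ℝ) (k k' : Fin N) :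
    bathA N α B m ω (.inr (k, 2)) (.inr (k', 3)) = 0 := rfl
private lemma bA57 (N : ℕ) (α B : ℝ) (m ω : Fin N → ℝ) (k : Fin N) :
    bathA N α B m ω (.inr (k, 3)) (.inl 0) = 0 := rfl
private lemma bA58 (N : ℕ) (α B : ℝ) (m ω : Fin N → ℝ) (k : Fin N) :
    bathA N α B m ω (.inr (k, 3)) (.inl 1) = ω k ^ 2 := rfl
private lemma bA59 (N : ℕ) (α B : ℝ) (m ω : Fin N → ℝ) (k : Fin N) :
    bathA N α B m ω (.inr (k, 3)) (.inl 2) = 0 := rfl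
private lemma bA60 (N : ℕ) (α B : ℝ) (m ω : Fin N → ℝ) (k : Fin N) :
    bathA N α B m ω (.inr (k, 3)) (.inl 3) = 0 := rfl
private lemma bA61 (N : ℕ) (α B : ℝ) (m ω : Fin N → ℝ) (k k' : Fin N) :
    bathA N α B m ω (.inr (k, 3)) (.inr (k', 0)) = 0 := rfl
private lemma bA62 (N : ℕ) (α B : ℝ) (m ω : Fin N → ℝ) (k k' : Fin N) :
    bathA N α B m ω (.inr (k, 3)) (.inr (k', 1)) = if k = k' then -(ω k ^ 2) else 0 := rfl
private lemma bA63 (N : ℕ) (α B : ℝ) (m ω : Fin N → ℝ) (k k' : Fin N) :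
    bathA N α B m ω (.inr (k, 3)) (.inr (k', 2)) = 0 := rfl
private lemma bA64 (N : ℕ) (α B : ℝ) (m ω : Fin N → ℝ) (k k' : Fin N) :
    bathA N α B m ω (.inr (k, 3)) (.inr (k', 3)) = 0 := rfl



private lemma perk (lam mr w a b c d p q r s : ℂ)
    (hw : conj' w = w)
    (h1 : c = lam * a) (h2 : d = lam * b)
    (h5 : r = lam * p) (h6 : s = lam * q)
    (h7 : w * a - w * p = lam * r) (h8 : w * b - w * q = lam * s) :
    mr * w * (conj' c * (p - a) + c * (conj' p - conj' a)
        + conj' d * (q - b) + d * (conj' q - conj' b))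
      + (lam + conj' lam) * (mr * (conj' r * r + conj' s * s)
        + mr * w * ((conj' p - conj' a) * (p - a) + (conj' q - conj' b) * (q - b))) = 0 := by
  have h1' : conj' c = conj' lam * conj' a := by simpa using congrArg conj' h1
  have h2' : conj' d = conj' lam * conj' b := by simpa using congrArg conj' h2
  have h5' : conj' r = conj' lam * conj' p := by simpa using congrArg conj' h5
  have h6' : conj' s = conj' lam * conj' q := by simpa using congrArg conj' h6
  have h7' : w * conj' a - w * conj' p = conj' lam * conj' r := by
    have := congrArg conj' h7; simpa [hw] using this
  have h8' : w * conj' b - w * conj' q = conj' lam * conj' s := by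
    have := congrArg conj' h8; simpa [hw] using this
  linear_combination (-(mr * conj' r)) * h7 + (-(mr * r)) * h7'
    + mr * w * (conj' a - conj' p) * h5 + mr * w * (conj' p - conj' a) * h1
    + mr * w * (a - p) * h5' + mr * w * (p - a) * h1'
    + (-(mr * conj' s)) * h8 + (-(mr * s)) * h8'
    + mr * w * (conj' b - conj' q) * h6 + mr * w * (conj' q - conj' b) * h2
    + mr * w * (b - q) * h6' + mr * w * (q - b) * h2'

private lemma l0lemma (lam al B Mc S1 S1' S2 S2' a b c d : ℂ)
    (hal : conj' al = al) (hB : conj' B = B) (hM : conj' Mc = Mc)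
    (hS1 : conj' S1 = S1') (hS2 : conj' S2 = S2')
    (h1 : c = lam * a) (h2 : d = lam * b)
    (h3 : -(al + Mc) * a + B * d + S1 = lam * c)
    (h4 : -(al + Mc) * b - B * c + S2 = lam * d) :
    (lam + conj' lam) * (conj' c * c + conj' d * d + al * (conj' a * a + conj' b * b))
      = conj' c * S1 + c * S1' + conj' d * S2 + d * S2'
        - (conj' c * a + c * conj' a + conj' d * b + d * conj' b) * Mc := by
  have h1' : conj' c = conj' lam * conj' a := by simpa using congrArg conj' h1
  have h2' : conj' d = conj' lam * conj' b := by simpa using congrArg conj' h2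
  have h3' : -(al + Mc) * conj' a + B * conj' d + S1' = conj' lam * conj' c := by
    have := congrArg conj' h3; simpa [hal, hB, hM, hS1] using this
  have h4' : -(al + Mc) * conj' b - B * conj' c + S2' = conj' lam * conj' d := by
    have := congrArg conj' h4; simpa [hal, hB, hM, hS2] using this
  linear_combination (-(conj' c)) * h3 + (-c) * h3' + (-(conj' d)) * h4 + (-d) * h4'
    + (-(al * conj' a)) * h1 + (-(al * a)) * h1'
    + (-(al * conj' b)) * h2 + (-(al * b)) * h2'

/-- Stability of the coupled system when the uncoupled oscillator is strongly
stable: if α > 0 then every eigenvalue of the oscillator–bath matrix A is purely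
imaginary. -/
theorem stmt9 (N : ℕ) (α B : ℝ) (m ω : Fin N → ℝ)
    (hm : ∀ j, 0 < m j) (hω : ∀ j, 0 < ω j) (hmono : StrictMono ω)
    (hα : 0 < α) :
    ∀ lam : ℂ,
      (lam • (1 : Matrix (BathIdx N) (BathIdx N) ℂ) -
        (bathA N α B m ω).map Complex.ofReal).det = 0 →
      lam.re = 0 := by
  intro lam hdet
  obtain ⟨v, hv0, hv⟩ := (Matrix.exists_mulVec_eq_zero_iff).2 hdet
  have hAv : ((bathA N α B m ω).map Complex.ofReal).mulVec v = lam • v := by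
    rw [Matrix.sub_mulVec, Matrix.smul_mulVec, Matrix.one_mulVec, sub_eq_zero] at hv
    exact hv.symm
  have key : ∀ i, ∑ j, (((bathA N α B m ω) i j : ℂ)) * v j = lam * v i := by
    intro i
    have := congrFun hAv i
    simpa [Matrix.mulVec, dotProduct] using this
  -- component equations
  have E1 : v (.inl 2) = lam * v (.inl 0) := by
    have h := key (.inl 0)
    simp only [Fintype.sum_sum_type, Fintype.sum_prod_type, Fin.sum_univ_four,
      bA1, bA2, bA3, bA4, bA5, bA6, bA7, bA8, Complex.ofReal_zero, Complex.ofReal_one,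
      zero_mul, one_mul, add_zero, zero_add, Finset.sum_const_zero] at h
    exact h
  have E2 : v (.inl 3) = lam * v (.inl 1) := by
    have h := key (.inl 1)
    simp only [Fintype.sum_sum_type, Fintype.sum_prod_type, Fin.sum_univ_four,
      bA9, bA10, bA11, bA12, bA13, bA14, bA15, bA16, Complex.ofReal_zero, Complex.ofReal_one,
      zero_mul, one_mul, add_zero, zero_add, Finset.sum_const_zero] at h
    exact h
  have E3 : -((α:ℂ) + ∑ x, (m x:ℂ) * (ω x:ℂ)^2) * v (.inl 0) + (B:ℂ) * v (.inl 3)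
      + ∑ x, (m x:ℂ) * (ω x:ℂ)^2 * v (.inr (x,0)) = lam * v (.inl 2) := by
    have h := key (.inl 2)
    simp only [Fintype.sum_sum_type, Fintype.sum_prod_type, Fin.sum_univ_four,
      bA17, bA18, bA19, bA20, bA21, bA22, bA23, bA24, Complex.ofReal_zero,
      zero_mul, add_zero, zero_add, Finset.sum_const_zero] at h
    push_cast at h
    linear_combination h
  have E4 : -((α:ℂ) + ∑ x, (m x:ℂ) * (ω x:ℂ)^2) * v (.inl 1) - (B:ℂ) * v (.inl 2)
      + ∑ x, (m x:ℂ) * (ω x:ℂ)^2 * v (.inr (x,1)) = lam * v (.inl 3) := by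
    have h := key (.inl 3)
    simp only [Fintype.sum_sum_type, Fintype.sum_prod_type, Fin.sum_univ_four,
      bA25, bA26, bA27, bA28, bA29, bA30, bA31, bA32, Complex.ofReal_zero,
      zero_mul, add_zero, zero_add, Finset.sum_const_zero] at h
    push_cast at h
    linear_combination h
  have E5 : ∀ k, v (.inr (k,2)) = lam * v (.inr (k,0)) := by
    intro k
    have h := key (.inr (k,0))
    simp only [Fintype.sum_sum_type, Fintype.sum_prod_type, Fin.sum_univ_four,
      bA33, bA34, bA35, bA36, bA37, bA38, bA39, bA40, Complex.ofReal_zero,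
      apply_ite (fun r : ℝ => (r : ℂ)), Complex.ofReal_one, ite_mul, one_mul,
      zero_mul, add_zero, zero_add, Finset.sum_const_zero, Finset.sum_ite_eq,
      Finset.mem_univ, if_true] at h
    exact h
  have E6 : ∀ k, v (.inr (k,3)) = lam * v (.inr (k,1)) := by
    intro k
    have h := key (.inr (k,1))
    simp only [Fintype.sum_sum_type, Fintype.sum_prod_type, Fin.sum_univ_four,
      bA41, bA42, bA43, bA44, bA45, bA46, bA47, bA48, Complex.ofReal_zero,
      apply_ite (fun r : ℝ => (r : ℂ)), Complex.ofReal_one, ite_mul, one_mul,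
      zero_mul, add_zero, zero_add, Finset.sum_const_zero, Finset.sum_ite_eq,
      Finset.mem_univ, if_true] at h
    exact h
  have E7 : ∀ k, (ω k:ℂ)^2 * v (.inl 0) - (ω k:ℂ)^2 * v (.inr (k,0))
      = lam * v (.inr (k,2)) := by
    intro k
    have h := key (.inr (k,2))
    simp only [Fintype.sum_sum_type, Fintype.sum_prod_type, Fin.sum_univ_four,
      bA49, bA50, bA51, bA52, bA53, bA54, bA55, bA56, Complex.ofReal_zero,
      apply_ite (fun r : ℝ => (r : ℂ)), Complex.ofReal_neg, neg_mul, ite_mul,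
      zero_mul, add_zero, zero_add, Finset.sum_const_zero, Finset.sum_ite_eq,
      Finset.mem_univ, if_true, Complex.ofReal_pow] at h
    linear_combination h
  have E8 : ∀ k, (ω k:ℂ)^2 * v (.inl 1) - (ω k:ℂ)^2 * v (.inr (k,1))
      = lam * v (.inr (k,3)) := by
    intro k
    have h := key (.inr (k,3))
    simp only [Fintype.sum_sum_type, Fintype.sum_prod_type, Fin.sum_univ_four,
      bA57, bA58, bA59, bA60, bA61, bA62, bA63, bA64, Complex.ofReal_zero,
      apply_ite (fun r : ℝ => (r : ℂ)), Complex.ofReal_neg, neg_mul, ite_mul,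
      zero_mul, add_zero, zero_add, Finset.sum_const_zero, Finset.sum_ite_eq,
      Finset.mem_univ, if_true, Complex.ofReal_pow] at h
    linear_combination h
  
  -- energy
  set F : ℝ := Complex.normSq (v (.inl 2)) + Complex.normSq (v (.inl 3))
      + α * (Complex.normSq (v (.inl 0)) + Complex.normSq (v (.inl 1)))
      + ∑ k, (m k * (Complex.normSq (v (.inr (k,2))) + Complex.normSq (v (.inr (k,3))))
        + m k * ω k^2 * (Complex.normSq (v (.inr (k,0)) - v (.inl 0))
          + Complex.normSq (v (.inr (k,1)) - v (.inl 1)))) with hFdef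
  have hsum_nonneg : ∀ k : Fin N, 0 ≤ m k * (Complex.normSq (v (.inr (k,2))) + Complex.normSq (v (.inr (k,3))))
        + m k * ω k^2 * (Complex.normSq (v (.inr (k,0)) - v (.inl 0))
          + Complex.normSq (v (.inr (k,1)) - v (.inl 1))) := by
    intro k
    have := Complex.normSq_nonneg (v (.inr (k,2)))
    have := Complex.normSq_nonneg (v (.inr (k,3)))
    have := Complex.normSq_nonneg (v (.inr (k,0)) - v (.inl 0))
    have := Complex.normSq_nonneg (v (.inr (k,1)) - v (.inl 1))
    have h1 := (hm k).le
    have h2 := pow_nonneg (hω k).le 2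
    positivity
  have hFpos : 0 < F := by
    have n2 := Complex.normSq_nonneg (v (.inl 2))
    have n3 := Complex.normSq_nonneg (v (.inl 3))
    have n0 := Complex.normSq_nonneg (v (.inl 0))
    have n1 := Complex.normSq_nonneg (v (.inl 1))
    have hs : (0:ℝ) ≤ ∑ k, (m k * (Complex.normSq (v (.inr (k,2))) + Complex.normSq (v (.inr (k,3))))
        + m k * ω k^2 * (Complex.normSq (v (.inr (k,0)) - v (.inl 0))
          + Complex.normSq (v (.inr (k,1)) - v (.inl 1)))) :=
      Finset.sum_nonneg fun k _ => hsum_nonneg k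
    have hαn : 0 ≤ α * (Complex.normSq (v (.inl 0)) + Complex.normSq (v (.inl 1))) := by positivity
    have hFnonneg : (0:ℝ) ≤ F := by rw [hFdef]; linarith
    rcases hFnonneg.lt_or_eq with h | h
    · exact h
    · exfalso
      have hF0 : F = 0 := h.symm
      rw [hFdef] at hF0
      have z2 : v (.inl 2) = 0 := by rw [← Complex.normSq_eq_zero]; linarith
      have z3 : v (.inl 3) = 0 := by rw [← Complex.normSq_eq_zero]; linarith
      have hab : Complex.normSq (v (.inl 0)) + Complex.normSq (v (.inl 1)) = 0 := by
        have hprod : α * (Complex.normSq (v (.inl 0)) + Complex.normSq (v (.inl 1))) = 0 := by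
          linarith
        rcases mul_eq_zero.mp hprod with h' | h'
        · exact absurd h' hα.ne'
        · exact h'
      have z0 : v (.inl 0) = 0 := by rw [← Complex.normSq_eq_zero]; linarith
      have z1 : v (.inl 1) = 0 := by rw [← Complex.normSq_eq_zero]; linarith
      have hsz : ∑ k, (m k * (Complex.normSq (v (.inr (k,2))) + Complex.normSq (v (.inr (k,3))))
        + m k * ω k^2 * (Complex.normSq (v (.inr (k,0)) - v (.inl 0))
          + Complex.normSq (v (.inr (k,1)) - v (.inl 1)))) = 0 := by linarith
      have hk : ∀ k : Fin N, ∀ l : Fin 4, v (.inr (k, l)) = 0 := by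
        intro k
        have hterm := (Finset.sum_eq_zero_iff_of_nonneg
          (fun k _ => hsum_nonneg k)).1 hsz k (Finset.mem_univ k)
        have m0 := Complex.normSq_nonneg (v (.inr (k,0)) - v (.inl 0))
        have m1 := Complex.normSq_nonneg (v (.inr (k,1)) - v (.inl 1))
        have m2 := Complex.normSq_nonneg (v (.inr (k,2)))
        have m3 := Complex.normSq_nonneg (v (.inr (k,3)))
        have hmk := hm k
        have hωk := pow_pos (hω k) 2
        have p1 : 0 ≤ m k * (Complex.normSq (v (.inr (k,2))) + Complex.normSq (v (.inr (k,3)))) :=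
          mul_nonneg hmk.le (by linarith)
        have p2 : 0 ≤ m k * ω k^2 * (Complex.normSq (v (.inr (k,0)) - v (.inl 0))
            + Complex.normSq (v (.inr (k,1)) - v (.inl 1))) :=
          mul_nonneg (mul_nonneg hmk.le hωk.le) (by linarith)
        have q1 : Complex.normSq (v (.inr (k,2))) + Complex.normSq (v (.inr (k,3))) = 0 := by
          have : m k * (Complex.normSq (v (.inr (k,2))) + Complex.normSq (v (.inr (k,3)))) = 0 := by
            linarith
          rcases mul_eq_zero.mp this with h' | h'
          · exact absurd h' hmk.ne'
          · exact h'
        have q2 : Complex.normSq (v (.inr (k,0)) - v (.inl 0))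
            + Complex.normSq (v (.inr (k,1)) - v (.inl 1)) = 0 := by
          have : m k * ω k^2 * (Complex.normSq (v (.inr (k,0)) - v (.inl 0))
              + Complex.normSq (v (.inr (k,1)) - v (.inl 1))) = 0 := by linarith
          rcases mul_eq_zero.mp this with h' | h'
          · exact absurd h' (mul_pos hmk hωk).ne'
          · exact h'
        have z2' : v (.inr (k,2)) = 0 := by rw [← Complex.normSq_eq_zero]; linarith
        have z3' : v (.inr (k,3)) = 0 := by rw [← Complex.normSq_eq_zero]; linarith
        have z0' : v (.inr (k,0)) = 0 := by
          have hd : v (.inr (k,0)) - v (.inl 0) = 0 := by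
            rw [← Complex.normSq_eq_zero]; linarith
          rw [z0] at hd; simpa using hd
        have z1' : v (.inr (k,1)) = 0 := by
          have hd : v (.inr (k,1)) - v (.inl 1) = 0 := by
            rw [← Complex.normSq_eq_zero]; linarith
          rw [z1] at hd; simpa using hd
        intro l; fin_cases l
        · exact z0'
        · exact z1'
        · exact z2'
        · exact z3'
      apply hv0
      funext i
      rcases i with i | ⟨k, l⟩
      · fin_cases i
        · exact z0
        · exact z1
        · exact z2
        · exact z3
      · exact hk k l
  -- complex form of F
  have Fc : (F : ℂ) = (conj' (v (.inl 2)) * v (.inl 2) + conj' (v (.inl 3)) * v (.inl 3)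
        + (α:ℂ) * (conj' (v (.inl 0)) * v (.inl 0) + conj' (v (.inl 1)) * v (.inl 1)))
      + ∑ k, ((m k:ℂ) * (conj' (v (.inr (k,2))) * v (.inr (k,2)) + conj' (v (.inr (k,3))) * v (.inr (k,3)))
        + (m k:ℂ) * (ω k:ℂ)^2 * ((conj' (v (.inr (k,0))) - conj' (v (.inl 0))) * (v (.inr (k,0)) - v (.inl 0))
          + (conj' (v (.inr (k,1))) - conj' (v (.inl 1))) * (v (.inr (k,1)) - v (.inl 1)))) := by
    rw [hFdef]
    push_cast [Complex.normSq_eq_conj_mul_self, map_sub]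
    ring
  have main : (lam + conj' lam) * (F : ℂ) = 0 := by
    rw [Fc, mul_add, Finset.mul_sum]
    have hL0 : (lam + conj' lam) * (conj' (v (.inl 2)) * v (.inl 2) + conj' (v (.inl 3)) * v (.inl 3)
        + (α:ℂ) * (conj' (v (.inl 0)) * v (.inl 0) + conj' (v (.inl 1)) * v (.inl 1)))
        = ∑ k, (m k:ℂ) * (ω k:ℂ)^2 * (conj' (v (.inl 2)) * (v (.inr (k,0)) - v (.inl 0))
            + v (.inl 2) * (conj' (v (.inr (k,0))) - conj' (v (.inl 0)))
            + conj' (v (.inl 3)) * (v (.inr (k,1)) - v (.inl 1))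
            + v (.inl 3) * (conj' (v (.inr (k,1))) - conj' (v (.inl 1)))) := by
      rw [l0lemma lam (α:ℂ) (B:ℂ) (∑ x, (m x:ℂ) * (ω x:ℂ)^2)
          (∑ x, (m x:ℂ) * (ω x:ℂ)^2 * v (.inr (x,0)))
          (∑ x, (m x:ℂ) * (ω x:ℂ)^2 * conj' (v (.inr (x,0))))
          (∑ x, (m x:ℂ) * (ω x:ℂ)^2 * v (.inr (x,1)))
          (∑ x, (m x:ℂ) * (ω x:ℂ)^2 * conj' (v (.inr (x,1))))
          (v (.inl 0)) (v (.inl 1)) (v (.inl 2)) (v (.inl 3))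
          (Complex.conj_ofReal α) (Complex.conj_ofReal B)
          (by simp [map_sum, Complex.conj_ofReal])
          (by simp [map_sum, Complex.conj_ofReal, mul_comm])
          (by simp [map_sum, Complex.conj_ofReal, mul_comm])
          E1 E2 E3 E4]
      simp only [Finset.mul_sum, ← Finset.sum_add_distrib, ← Finset.sum_sub_distrib]
      exact Finset.sum_congr rfl fun k _ => by ring
    rw [hL0, ← Finset.sum_add_distrib]
    refine Finset.sum_eq_zero fun k _ => ?_
    exact perk lam (m k:ℂ) ((ω k:ℂ)^2) (v (.inl 0)) (v (.inl 1)) (v (.inl 2)) (v (.inl 3))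
      (v (.inr (k,0))) (v (.inr (k,1))) (v (.inr (k,2))) (v (.inr (k,3)))
      (by simp [Complex.conj_ofReal]) E1 E2 (E5 k) (E6 k) (E7 k) (E8 k)
  have h2re : ((2 * lam.re : ℝ) : ℂ) * (F : ℂ) = 0 := by
    rw [show ((2 * lam.re : ℝ) : ℂ) = lam + conj' lam from (Complex.add_conj lam).symm]
    exact main
  have hreal : (2 * lam.re) * F = 0 := by exact_mod_cast h2re
  rcases mul_eq_zero.mp hreal with h | h
  · linarith
  · exact absurd h hFpos.ne'
end

section
/- Graphical stability criterion, stable case: Consider the isotropic oscillator–bath system with mⱼ > 0 and 0 < ω₁ < ⋯ < ω_N, written as a first-order system ż = Az on ℝ^{4N+4}, in the gyroscopically stable regime α < 0, B > 0, α + B²/4 > 0. If there exists ω with 0 < ω < ω₁ and a sign s ∈ {+1, −1} such that (ω + sB/2)² − (α + B²/4) = Σⱼ mⱼωⱼ²ω²/(ω² − ωⱼ²) (i.e. the smallest positive solution Ω₁ of the characteristic equation satisfies Ω₁ < ω₁), then every eigenvalue of A has real part equal to zero. -/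
open Matrix

namespace BathAux

open Polynomial Finset

/-- The real characteristic polynomial `Q_s` of the coupled system (in the variable
`Ω` with eigenvalue `λ = iΩ`), cleared of denominators. -/
noncomputable def Q (N : ℕ) (α B s : ℝ) (m ω : Fin N → ℝ) : Polynomial ℝ :=
  (C α - C (s * B) * X - X ^ 2) * ∏ j, (C (ω j ^ 2) - X ^ 2)
    - ∑ j, C (m j * ω j ^ 2) * X ^ 2 * ∏ k ∈ Finset.univ.erase j, (C (ω k ^ 2) - X ^ 2)

variable {N : ℕ} {α B s : ℝ} {m ω : Fin N → ℝ}

lemma Q_eval (t : ℝ) : (Q N α B s m ω).eval t =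
    (α - s * B * t - t ^ 2) * ∏ j, (ω j ^ 2 - t ^ 2)
      - ∑ j, m j * ω j ^ 2 * t ^ 2 * ∏ k ∈ Finset.univ.erase j, (ω k ^ 2 - t ^ 2) := by
  simp [Q, eval_prod, eval_finset_sum]

lemma Q_eval_map (z : ℂ) : ((Q N α B s m ω).map Complex.ofRealHom).eval z =
    ((α : ℂ) - (s : ℂ) * (B : ℂ) * z - z ^ 2) * ∏ j, ((ω j : ℂ) ^ 2 - z ^ 2)
      - ∑ j, (m j : ℂ) * (ω j : ℂ) ^ 2 * z ^ 2 *
          ∏ k ∈ Finset.univ.erase j, ((ω k : ℂ) ^ 2 - z ^ 2) := by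
  simp only [Q, Polynomial.map_sub, Polynomial.map_mul, Polynomial.map_prod,
    Polynomial.map_pow, Polynomial.map_sum, Polynomial.map_C, Polynomial.map_X,
    eval_sub, eval_mul, eval_pow, eval_C, eval_X, eval_prod, eval_finset_sum,
    Complex.ofRealHom_eq_coe]
  push_cast
  simp only [sub_eq_neg_add]

lemma Q_eval_neg (t : ℝ) :
    (Q N α B (-s) m ω).eval (-t) = (Q N α B s m ω).eval t := by
  rw [Q_eval, Q_eval]
  simp [neg_sq, neg_mul, mul_neg, neg_neg]

/-- A solution of the characteristic equation below the first bath frequency gives a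
root of `Q`. -/
lemma Q_root_of_char (hN : 0 < N) (hω : ∀ j, 0 < ω j) (hmono : StrictMono ω)
    {w : ℝ} (hw0 : 0 < w) (hwlt : w < ω ⟨0, hN⟩) (hs : s = 1 ∨ s = -1)
    (heq : (w + s * B / 2) ^ 2 - (α + B ^ 2 / 4) =
      ∑ j, m j * ω j ^ 2 * w ^ 2 / (w ^ 2 - ω j ^ 2)) :
    (Q N α B s m ω).eval w = 0 := by
  have hwj : ∀ j : Fin N, w < ω j := fun j =>
    lt_of_lt_of_le hwlt (hmono.monotone (by exact Fin.mk_le_of_le_val (Nat.zero_le _)))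
  have hds : ∀ j : Fin N, w ^ 2 - ω j ^ 2 ≠ 0 := by
    intro j
    have := hwj j
    have := hw0
    nlinarith
  have hA : α - s * B * w - w ^ 2 =
      -∑ j, m j * ω j ^ 2 * w ^ 2 / (w ^ 2 - ω j ^ 2) := by
    rcases hs with rfl | rfl <;> linear_combination -heq
  rw [Q_eval, hA]
  rw [neg_mul, Finset.sum_mul]
  have hprod : ∀ j ∈ Finset.univ, (m j * ω j ^ 2 * w ^ 2 / (w ^ 2 - ω j ^ 2)) *
      ∏ k, (ω k ^ 2 - w ^ 2)
      = -(m j * ω j ^ 2 * w ^ 2 * ∏ k ∈ Finset.univ.erase j, (ω k ^ 2 - w ^ 2)) := by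
    intro j _
    rw [← Finset.mul_prod_erase Finset.univ _ (Finset.mem_univ j)]
    have h1 : m j * ω j ^ 2 * w ^ 2 / (w ^ 2 - ω j ^ 2) *
        ((ω j ^ 2 - w ^ 2) * ∏ k ∈ Finset.univ.erase j, (ω k ^ 2 - w ^ 2)) =
        -(m j * ω j ^ 2 * w ^ 2 / (w ^ 2 - ω j ^ 2) * (w ^ 2 - ω j ^ 2)) *
          ∏ k ∈ Finset.univ.erase j, (ω k ^ 2 - w ^ 2) := by ring
    rw [h1, div_mul_cancel₀ _ (hds j)]
    ring
  rw [Finset.sum_congr rfl hprod]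
  simp

/-- Value of `Q` at `±ω j`. -/
lemma Q_eval_omega (j : Fin N) (t : ℝ) (ht : t ^ 2 = ω j ^ 2) :
    (Q N α B s m ω).eval t =
      -(m j * ω j ^ 2 * ω j ^ 2 * ∏ k ∈ Finset.univ.erase j, (ω k ^ 2 - ω j ^ 2)) := by
  rw [Q_eval]
  rw [Finset.prod_eq_zero (Finset.mem_univ j) (by rw [ht]; ring)]
  rw [Finset.sum_eq_single j]
  · rw [ht]; ring
  · intro b _ hb
    rw [Finset.prod_eq_zero (Finset.mem_erase.mpr ⟨hb.symm, Finset.mem_univ j⟩)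
      (by rw [ht]; ring)]
    ring
  · simp

lemma prod_neg_sign {ι : Type*} [DecidableEq ι] (T : Finset ι) (f : ι → ℝ)
    (h : ∀ x ∈ T, f x < 0) : 0 < (-1 : ℝ) ^ T.card * ∏ x ∈ T, f x := by
  induction T using Finset.cons_induction with
  | empty => simp
  | cons a T ha ih =>
    rw [Finset.prod_cons, Finset.card_cons, pow_succ]
    have h1 := ih (fun x hx => h x (Finset.mem_cons_of_mem hx))
    have h2 := h a (Finset.mem_cons_self a T)
    nlinarith

/-- Sign of `Q` at `±ω j` : `(-1)^j Q(±ω_j) < 0`. -/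
lemma Q_sign (hm : ∀ j, 0 < m j) (hω : ∀ j, 0 < ω j) (hmono : StrictMono ω)
    (j : Fin N) (t : ℝ) (ht : t ^ 2 = ω j ^ 2) :
    (-1 : ℝ) ^ (j : ℕ) * (Q N α B s m ω).eval t < 0 := by
  rw [Q_eval_omega j t ht]
  have hsplit := (Finset.prod_filter_mul_prod_filter_not (Finset.univ.erase j)
    (fun k => k < j) (fun k => ω k ^ 2 - ω j ^ 2)).symm
  have hcard : ((Finset.univ.erase j).filter (fun k => k < j)).card = (j : ℕ) := by
    have he : (Finset.univ.erase j).filter (fun k => k < j) = Finset.Iio j := by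
      ext k
      simp only [Finset.mem_filter, Finset.mem_erase, Finset.mem_univ, and_true,
        true_and, Finset.mem_Iio]
      exact ⟨fun h => h.2, fun h => ⟨ne_of_lt h, h⟩⟩
    rw [he, Fin.card_Iio]
  have hneg : 0 < (-1 : ℝ) ^ (j : ℕ) *
      ∏ k ∈ (Finset.univ.erase j).filter (fun k => k < j), (ω k ^ 2 - ω j ^ 2) := by
    rw [← hcard]
    refine prod_neg_sign _ _ ?_
    intro k hk
    rw [Finset.mem_filter, Finset.mem_erase] at hk
    have := hmono hk.2
    nlinarith [hω k, hω j]
  have hpos : 0 < ∏ k ∈ (Finset.univ.erase j).filter (fun k => ¬ k < j),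
      (ω k ^ 2 - ω j ^ 2) := by
    refine Finset.prod_pos ?_
    intro k hk
    rw [Finset.mem_filter, Finset.mem_erase] at hk
    have hjk : j < k := lt_of_le_of_ne (not_lt.1 hk.2) (Ne.symm hk.1.1)
    have := hmono hjk
    nlinarith [hω k, hω j]
  rw [hsplit]
  have hmj := hm j
  have hωj := hω j
  nlinarith [mul_pos (mul_pos (mul_pos hmj (pow_pos hωj 2))
    (mul_pos (pow_pos hωj 2) hneg)) hpos]

lemma quad_natDegree : (C α - C (s * B) * X - X ^ 2 : Polynomial ℝ).natDegree = 2 ∧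
    (C α - C (s * B) * X - X ^ 2 : Polynomial ℝ).leadingCoeff = -1 := by
  have h : (C α - C (s * B) * X - X ^ 2 : Polynomial ℝ)
      = C (-1) * X ^ 2 + C (-(s * B)) * X + C α := by
    simp only [map_neg, C_1]
    ring
  rw [h]
  exact ⟨natDegree_quadratic (by norm_num), leadingCoeff_quadratic (by norm_num)⟩

lemma fact_natDegree (c : ℝ) : (C c - X ^ 2 : Polynomial ℝ).natDegree = 2 ∧
    (C c - X ^ 2 : Polynomial ℝ).leadingCoeff = -1 := by
  have h : (C c - X ^ 2 : Polynomial ℝ) = C (-1) * X ^ 2 + C 0 * X + C c := by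
    simp only [map_neg, map_zero, C_1]
    ring
  rw [h]
  exact ⟨natDegree_quadratic (by norm_num), leadingCoeff_quadratic (by norm_num)⟩

lemma prodfact_natDegree :
    (∏ j, (C (ω j ^ 2) - X ^ 2) : Polynomial ℝ).natDegree = 2 * N ∧
      (∏ j, (C (ω j ^ 2) - X ^ 2) : Polynomial ℝ).leadingCoeff = (-1 : ℝ) ^ N := by
  have hlc : (∏ j : Fin N, ((C (ω j ^ 2) - X ^ 2 : Polynomial ℝ)).leadingCoeff)
      = (-1 : ℝ) ^ N := by
    rw [Finset.prod_congr rfl (fun j _ => (fact_natDegree (ω j ^ 2)).2)]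
    simp
  have hne : (∏ j : Fin N, ((C (ω j ^ 2) - X ^ 2 : Polynomial ℝ)).leadingCoeff) ≠ 0 := by
    rw [hlc]
    positivity
  constructor
  · rw [natDegree_prod' _ _ hne, Finset.sum_congr rfl (fun j _ => (fact_natDegree (ω j ^ 2)).1)]
    simp [Finset.sum_const, mul_comm]
  · rw [leadingCoeff_prod' _ _ hne, hlc]

lemma Q_natDegree_leadingCoeff :
    (Q N α B s m ω).natDegree = 2 * N + 2 ∧
      (Q N α B s m ω).leadingCoeff = (-1 : ℝ) ^ (N + 1) := by
  set q2 : Polynomial ℝ := C α - C (s * B) * X - X ^ 2 with hq2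
  set P : Polynomial ℝ := ∏ j, (C (ω j ^ 2) - X ^ 2) with hP
  have hmul_ne : q2.leadingCoeff * P.leadingCoeff ≠ 0 := by
    rw [quad_natDegree.2, prodfact_natDegree.2]
    simp [pow_ne_zero]
  have hdeg_main : (q2 * P).natDegree = 2 * N + 2 := by
    rw [natDegree_mul' hmul_ne, quad_natDegree.1, prodfact_natDegree.1]
    ring
  have hlc_main : (q2 * P).leadingCoeff = (-1 : ℝ) ^ (N + 1) := by
    rw [leadingCoeff_mul' hmul_ne, quad_natDegree.2, prodfact_natDegree.2]
    ring
  set S : Polynomial ℝ :=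
    ∑ j, C (m j * ω j ^ 2) * X ^ 2 * ∏ k ∈ Finset.univ.erase j, (C (ω k ^ 2) - X ^ 2)
    with hS
  have hdeg_S : S.natDegree ≤ 2 * N + 1 := by
    refine natDegree_sum_le_of_forall_le _ _ ?_
    intro j _
    have h1 : (C (m j * ω j ^ 2) * X ^ 2 *
        ∏ k ∈ Finset.univ.erase j, (C (ω k ^ 2) - X ^ 2) : Polynomial ℝ).natDegree ≤
        (C (m j * ω j ^ 2) * X ^ 2 : Polynomial ℝ).natDegree +
        (∏ k ∈ Finset.univ.erase j, (C (ω k ^ 2) - X ^ 2) : Polynomial ℝ).natDegree :=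
      natDegree_mul_le
    have h2 : (C (m j * ω j ^ 2) * X ^ 2 : Polynomial ℝ).natDegree ≤ 2 := by
      refine natDegree_mul_le.trans ?_
      rw [natDegree_C, natDegree_X_pow]
    have h3 : (∏ k ∈ Finset.univ.erase j, (C (ω k ^ 2) - X ^ 2) : Polynomial ℝ).natDegree
        ≤ 2 * (N - 1) := by
      refine le_trans (natDegree_prod_le _ _) ?_
      have : ∀ k ∈ Finset.univ.erase j, ((C (ω k ^ 2) - X ^ 2 : Polynomial ℝ)).natDegree = 2 :=
        fun k _ => (fact_natDegree (ω k ^ 2)).1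
      rw [Finset.sum_congr rfl this]
      rw [Finset.sum_const, Finset.card_erase_of_mem (Finset.mem_univ j)]
      simp [mul_comm]
    have hN1 : 1 ≤ N := j.pos
    omega
  have hdeg_S' : S.natDegree < (q2 * P).natDegree := by omega
  have hQdef : Q N α B s m ω = q2 * P - S := rfl
  have hdeg : (Q N α B s m ω).natDegree = 2 * N + 2 := by
    rw [hQdef, natDegree_sub_eq_left_of_natDegree_lt hdeg_S', hdeg_main]
  refine ⟨hdeg, ?_⟩
  have hco : (Q N α B s m ω).coeff (2 * N + 2) = (-1 : ℝ) ^ (N + 1) := by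
    rw [hQdef, coeff_sub,
      coeff_eq_zero_of_natDegree_lt
        (lt_of_le_of_lt hdeg_S (by omega) : S.natDegree < 2 * N + 2), sub_zero]
    rw [← hdeg_main]
    exact hlc_main
  rw [leadingCoeff, hdeg, hco]

lemma poly_ivt {p : Polynomial ℝ} {a b : ℝ} (hab : a < b)
    (h : p.eval a * p.eval b < 0) : ∃ x, a < x ∧ x < b ∧ p.eval x = 0 := by
  have hc : ContinuousOn (fun x => p.eval x) (Set.Icc a b) :=
    (Polynomial.continuous p).continuousOn
  rcases mul_neg_iff.1 h with ⟨ha, hb⟩ | ⟨ha, hb⟩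
  · obtain ⟨x, hx, hx0⟩ := intermediate_value_Ioo' hab.le hc
      (Set.mem_Ioo.mpr ⟨hb, ha⟩ : (0:ℝ) ∈ Set.Ioo (p.eval b) (p.eval a))
    exact ⟨x, hx.1, hx.2, hx0⟩
  · obtain ⟨x, hx, hx0⟩ := intermediate_value_Ioo hab.le hc
      (Set.mem_Ioo.mpr ⟨ha, hb⟩ : (0:ℝ) ∈ Set.Ioo (p.eval a) (p.eval b))
    exact ⟨x, hx.1, hx.2, hx0⟩

lemma ofRealHom_eq_algebraMap : (Complex.ofRealHom : ℝ →+* ℂ) = algebraMap ℝ ℂ := by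
  ext x
  rfl

/-- A real polynomial with `card T` distinct real roots and a nonreal root has
degree at least `card T + 2`. -/
lemma nonreal_root_bound (p : Polynomial ℝ) (hp0 : p ≠ 0) (T : Finset ℝ)
    (hT : ∀ t ∈ T, p.eval t = 0) (z : ℂ)
    (hz : (p.map Complex.ofRealHom).eval z = 0) (him : z.im ≠ 0) :
    T.card + 2 ≤ p.natDegree := by
  set pm : Polynomial ℂ := p.map Complex.ofRealHom with hpm
  have hpm0 : pm ≠ 0 := by
    rw [hpm, Ne, Polynomial.map_eq_zero_iff Complex.ofReal_injective]
    exact hp0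
  have hdegpm : pm.natDegree = p.natDegree :=
    natDegree_map_eq_of_injective Complex.ofReal_injective p
  set U : Finset ℂ := T.image Complex.ofReal ∪ {z, (starRingEnd ℂ) z} with hU
  have hUsub : U ⊆ pm.roots.toFinset := by
    intro u hu
    rw [Multiset.mem_toFinset, mem_roots hpm0]
    rw [hU, Finset.mem_union] at hu
    rcases hu with hu | hu
    · obtain ⟨t, ht, rfl⟩ := Finset.mem_image.1 hu
      show eval _ pm = 0
      rw [hpm, Polynomial.eval_map, show ((t:ℂ)) = Complex.ofRealHom t from rfl,
        Polynomial.eval₂_at_apply, hT t ht]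
      simp
    · rcases Finset.mem_insert.1 hu with rfl | hu
      · exact hz
      · rw [Finset.mem_singleton] at hu
        subst hu
        show eval _ pm = 0
        have hconj : pm.eval ((starRingEnd ℂ) z) = (starRingEnd ℂ) (pm.eval z) := by
          rw [hpm, ofRealHom_eq_algebraMap, Polynomial.eval_map, Polynomial.eval_map,
            ← Polynomial.aeval_def, ← Polynomial.aeval_def]
          exact Polynomial.aeval_conj p z
        rw [hconj, hz, map_zero]
  have hcardU : U.card = T.card + 2 := by
    have hzne : z ∉ T.image Complex.ofReal := by
      intro hmem
      obtain ⟨t, _, ht⟩ := Finset.mem_image.1 hmem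
      apply him
      rw [← ht]
      simp
    have hzcne : (starRingEnd ℂ) z ∉ T.image Complex.ofReal := by
      intro hmem
      obtain ⟨t, _, ht⟩ := Finset.mem_image.1 hmem
      apply him
      have h2 : ((starRingEnd ℂ) z).im = 0 := by rw [← ht]; simp
      simpa using h2
    have hzzc : z ≠ (starRingEnd ℂ) z := by
      intro h
      apply him
      have := congrArg Complex.im h
      simp only [Complex.conj_im] at this
      linarith
    rw [hU, Finset.card_union_of_disjoint, Finset.card_image_of_injective _
      Complex.ofReal_injective]
    · rw [Finset.card_insert_of_notMem (by simpa using hzzc), Finset.card_singleton]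
    · rw [Finset.disjoint_right]
      intro u hu
      rcases Finset.mem_insert.1 hu with rfl | hu
      · exact hzne
      · rw [Finset.mem_singleton] at hu; subst hu; exact hzcne
  calc T.card + 2 = U.card := hcardU.symm
    _ ≤ pm.roots.toFinset.card := Finset.card_le_card hUsub
    _ ≤ Multiset.card pm.roots := Multiset.toFinset_card_le _
    _ ≤ pm.natDegree := card_roots' pm
    _ = p.natDegree := hdegpm

/-- Generic root-counting: an even-degree (2n+2) real polynomial with alternating
signs at points `a j`, `-a j`, a root in `(-a 0, a 0)` and leading coefficient
`(-1)^(n+1)` has `2n+1` distinct real roots. -/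
lemma exists_roots_generic (p : Polynomial ℝ) (n : ℕ) (hn : 0 < n) (a : Fin n → ℝ)
    (ha : ∀ j, 0 < a j) (hamono : StrictMono a)
    (hdeg : p.natDegree = 2 * n + 2) (hlc : p.leadingCoeff = (-1 : ℝ) ^ (n + 1))
    (hsign : ∀ (j : Fin n) (t : ℝ), t ^ 2 = a j ^ 2 → (-1 : ℝ) ^ (j : ℕ) * p.eval t < 0)
    (r₀ : ℝ) (hr₀l : -a ⟨0, hn⟩ < r₀) (hr₀u : r₀ < a ⟨0, hn⟩) (hroot : p.eval r₀ = 0) :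
    ∃ T : Finset ℝ, T.card = 2 * n + 1 ∧ ∀ t ∈ T, p.eval t = 0 := by
  have ha0le : ∀ j : Fin n, a ⟨0, hn⟩ ≤ a j :=
    fun j => hamono.monotone (Fin.mk_le_of_le_val (Nat.zero_le _))
  have hε2 : ((-1 : ℝ) ^ (n + 1)) * ((-1 : ℝ) ^ (n + 1)) = 1 := by
    rw [← pow_add]
    exact Even.neg_one_pow ⟨n + 1, by ring⟩
  have hp0 : p ≠ 0 := by
    intro h
    rw [h, leadingCoeff_zero] at hlc
    have h1 : ((-1 : ℝ) ^ (n + 1)) ≠ 0 := by positivity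
    exact h1 hlc.symm
  -- normalized polynomial with positive leading coefficient
  have hR0 : (C ((-1 : ℝ) ^ (n + 1)) * p) ≠ 0 := by
    refine mul_ne_zero ?_ hp0
    rw [Ne, C_eq_zero]
    positivity
  have hRlc : (C ((-1 : ℝ) ^ (n + 1)) * p).leadingCoeff = 1 := by
    rw [leadingCoeff_mul, leadingCoeff_C, hlc, hε2]
  have hRdeg : (C ((-1 : ℝ) ^ (n + 1)) * p).natDegree = 2 * n + 2 := by
    rw [natDegree_C_mul (by positivity : ((-1 : ℝ) ^ (n + 1)) ≠ 0), hdeg]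
  have hRdegpos : 0 < (C ((-1 : ℝ) ^ (n + 1)) * p).degree := by
    rw [degree_eq_natDegree hR0, hRdeg]
    exact_mod_cast Nat.succ_pos _
  have htop := Polynomial.tendsto_atTop_of_leadingCoeff_nonneg _ hRdegpos
    (by rw [hRlc]; norm_num : (0:ℝ) ≤ (C ((-1 : ℝ) ^ (n + 1)) * p).leadingCoeff)
  obtain ⟨M, hMR, hMa⟩ := ((htop.eventually_gt_atTop 0).and
    (Filter.eventually_gt_atTop (a ⟨n - 1, by omega⟩))).exists
  have hMp : 0 < (-1 : ℝ) ^ (n + 1) * p.eval M := by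
    rw [eval_mul, eval_C] at hMR
    exact hMR
  -- the reflected polynomial, for the negative axis
  have hXlc : (-X : Polynomial ℝ).leadingCoeff = -1 := by
    rw [leadingCoeff_neg, leadingCoeff_X]
  have hXdeg : (-X : Polynomial ℝ).natDegree = 1 := by
    rw [natDegree_neg, natDegree_X]
  have hRcdeg : ((C ((-1 : ℝ) ^ (n + 1)) * p).comp (-X)).natDegree = 2 * n + 2 := by
    rw [natDegree_comp, hXdeg, hRdeg, mul_one]
  have hRclc : ((C ((-1 : ℝ) ^ (n + 1)) * p).comp (-X)).leadingCoeff = 1 := by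
    rw [leadingCoeff_comp (by rw [hXdeg]; norm_num), hRlc, hXlc, hRdeg, one_mul]
    exact Even.neg_one_pow ⟨n + 1, by ring⟩
  have hRc0 : ((C ((-1 : ℝ) ^ (n + 1)) * p).comp (-X)) ≠ 0 := by
    intro h
    rw [h, leadingCoeff_zero] at hRclc
    exact one_ne_zero hRclc.symm
  have hRcdegpos : 0 < ((C ((-1 : ℝ) ^ (n + 1)) * p).comp (-X)).degree := by
    rw [degree_eq_natDegree hRc0, hRcdeg]
    exact_mod_cast Nat.succ_pos _
  have htop2 := Polynomial.tendsto_atTop_of_leadingCoeff_nonneg _ hRcdegpos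
    (by rw [hRclc]; norm_num : (0:ℝ) ≤ ((C ((-1 : ℝ) ^ (n + 1)) * p).comp (-X)).leadingCoeff)
  obtain ⟨M', hM'R, hM'a⟩ := ((htop2.eventually_gt_atTop 0).and
    (Filter.eventually_gt_atTop (a ⟨n - 1, by omega⟩))).exists
  have hM'p : 0 < (-1 : ℝ) ^ (n + 1) * p.eval (-M') := by
    rw [eval_comp, eval_neg, eval_X, eval_mul, eval_C] at hM'R
    exact hM'R
  have hppar : ((-1 : ℝ)) ^ (n + 1) = (-1 : ℝ) ^ (n - 1) := by
    have h1 : n + 1 = (n - 1) + 2 := by omega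
    rw [h1, pow_add]
    norm_num
  have hsq : ((-1 : ℝ) ^ (n - 1)) * ((-1 : ℝ) ^ (n - 1)) = 1 := by
    rw [← pow_add]
    exact Even.neg_one_pow ⟨n - 1, by ring⟩
  have hlast : ∀ j : Fin n, ¬ ((j : ℕ) + 1 < n) → (j : ℕ) = n - 1 := by
    intro j h
    have := j.isLt
    omega
  -- upper interval endpoints on the positive side
  set e : Fin n → ℝ := fun j => if h : (j : ℕ) + 1 < n then a ⟨(j : ℕ) + 1, h⟩ else M
    with he
  have he1 : ∀ j, a j < e j := by
    intro j
    rw [he]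
    by_cases h : (j : ℕ) + 1 < n
    · simp only [h, dif_pos]
      exact hamono (by rw [Fin.lt_def]; simp)
    · simp only [h, dif_neg, not_false_iff]
      have hj : (j : ℕ) = n - 1 := hlast j h
      have : a ⟨n - 1, by omega⟩ = a j := by congr 1; rw [Fin.mk.injEq, hj]
      linarith [hMa]
  have he2 : ∀ j j' : Fin n, j < j' → e j ≤ a j' := by
    intro j j' hjj
    have hlt : (j : ℕ) + 1 < n := by
      have := j'.isLt
      rw [Fin.lt_def] at hjj
      omega
    rw [he]
    simp only [hlt, dif_pos]
    exact hamono.monotone (by rw [Fin.le_def]; rw [Fin.lt_def] at hjj; simpa using hjj)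
  have hsignprod : ∀ j : Fin n, p.eval (a j) * p.eval (e j) < 0 := by
    intro j
    have s1 := hsign j (a j) rfl
    rw [he]
    by_cases h : (j : ℕ) + 1 < n
    · simp only [h, dif_pos]
      have s2 := hsign ⟨(j : ℕ) + 1, h⟩ (a ⟨(j : ℕ) + 1, h⟩) rfl
      simp only [] at s2
      have hmul := mul_pos_of_neg_of_neg s1 s2
      have hpow : ((-1 : ℝ) ^ (j : ℕ)) * ((-1 : ℝ) ^ ((j : ℕ) + 1)) = -1 := by
        rw [← pow_add]
        exact Odd.neg_one_pow ⟨(j : ℕ), by ring⟩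
      nlinarith [hmul]
    · simp only [h, dif_neg, not_false_iff]
      have hj : (j : ℕ) = n - 1 := hlast j h
      rw [hj] at s1
      rw [hppar] at hMp
      nlinarith [mul_pos_of_neg_of_neg s1 (neg_neg_of_pos hMp)]
  have hfex : ∀ j : Fin n, ∃ x, a j < x ∧ x < e j ∧ p.eval x = 0 :=
    fun j => poly_ivt (he1 j) (hsignprod j)
  choose f hf1 hf2 hf3 using hfex
  -- lower interval endpoints on the negative side
  set b : Fin n → ℝ := fun j => if h : (j : ℕ) + 1 < n then -a ⟨(j : ℕ) + 1, h⟩ else -M'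
    with hb
  have hb1 : ∀ j, b j < -a j := by
    intro j
    rw [hb]
    by_cases h : (j : ℕ) + 1 < n
    · simp only [h, dif_pos]
      have := hamono (show j < ⟨(j : ℕ) + 1, h⟩ by rw [Fin.lt_def]; simp)
      linarith
    · simp only [h, dif_neg, not_false_iff]
      have hj : (j : ℕ) = n - 1 := hlast j h
      have : a ⟨n - 1, by omega⟩ = a j := by congr 1; rw [Fin.mk.injEq, hj]
      linarith [hM'a]
  have hb2 : ∀ j j' : Fin n, j < j' → -a j' ≤ b j := by
    intro j j' hjj
    have hlt : (j : ℕ) + 1 < n := by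
      have := j'.isLt
      rw [Fin.lt_def] at hjj
      omega
    rw [hb]
    simp only [hlt, dif_pos]
    have : a ⟨(j : ℕ) + 1, hlt⟩ ≤ a j' :=
      hamono.monotone (by rw [Fin.le_def]; rw [Fin.lt_def] at hjj; simpa using hjj)
    linarith
  have hsignprod2 : ∀ j : Fin n, p.eval (b j) * p.eval (-a j) < 0 := by
    intro j
    have s1 := hsign j (-a j) (by ring)
    rw [hb]
    by_cases h : (j : ℕ) + 1 < n
    · simp only [h, dif_pos]
      have s2 := hsign ⟨(j : ℕ) + 1, h⟩ (-a ⟨(j : ℕ) + 1, h⟩) (by ring)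
      simp only [] at s2
      have hmul := mul_pos_of_neg_of_neg s2 s1
      have hpow : ((-1 : ℝ) ^ (j : ℕ)) * ((-1 : ℝ) ^ ((j : ℕ) + 1)) = -1 := by
        rw [← pow_add]
        exact Odd.neg_one_pow ⟨(j : ℕ), by ring⟩
      nlinarith [hmul]
    · simp only [h, dif_neg, not_false_iff]
      have hj : (j : ℕ) = n - 1 := hlast j h
      rw [hj] at s1
      rw [hppar] at hM'p
      nlinarith [mul_pos_of_neg_of_neg s1 (neg_neg_of_pos hM'p)]
  have hgex : ∀ j : Fin n, ∃ x, b j < x ∧ x < -a j ∧ p.eval x = 0 :=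
    fun j => poly_ivt (hb1 j) (hsignprod2 j)
  choose g hg1 hg2 hg3 using hgex
  -- assembling the finset of roots
  have hfmono : StrictMono f := by
    intro j j' hjj
    calc f j < e j := hf2 j
      _ ≤ a j' := he2 j j' hjj
      _ < f j' := hf1 j'
  have hganti : StrictAnti g := by
    intro j j' hjj
    calc g j' < -a j' := hg2 j'
      _ ≤ b j := hb2 j j' hjj
      _ < g j := hg1 j
  have hfbig : ∀ j, a ⟨0, hn⟩ < f j := fun j => lt_of_le_of_lt (ha0le j) (hf1 j)
  have hgsmall : ∀ j, g j < -a ⟨0, hn⟩ := by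
    intro j
    have := ha0le j
    have := hg2 j
    linarith
  refine ⟨(Finset.univ.image f ∪ Finset.univ.image g) ∪ {r₀}, ?_, ?_⟩
  · rw [Finset.card_union_of_disjoint, Finset.card_union_of_disjoint,
      Finset.card_image_of_injective _ hfmono.injective,
      Finset.card_image_of_injective _ hganti.injective, Finset.card_singleton,
      Finset.card_univ, Fintype.card_fin]
    · ring
    · rw [Finset.disjoint_right]
      intro x hx
      obtain ⟨j, _, rfl⟩ := Finset.mem_image.1 hx
      intro hx'
      obtain ⟨j', _, hj'⟩ := Finset.mem_image.1 hx'
      have h1 := hfbig j'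
      have h2 := hgsmall j
      have h3 := ha ⟨0, hn⟩
      rw [hj'] at h1
      linarith
    · rw [Finset.disjoint_right]
      intro x hx
      rw [Finset.mem_singleton] at hx
      subst hx
      intro hx'
      rcases Finset.mem_union.1 hx' with hx' | hx'
      · obtain ⟨j, _, hj⟩ := Finset.mem_image.1 hx'
        have := hfbig j
        rw [hj] at this
        linarith
      · obtain ⟨j, _, hj⟩ := Finset.mem_image.1 hx'
        have := hgsmall j
        rw [hj] at this
        linarith
  · intro t ht
    rcases Finset.mem_union.1 ht with ht | ht
    · rcases Finset.mem_union.1 ht with ht | ht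
      · obtain ⟨j, _, rfl⟩ := Finset.mem_image.1 ht
        exact hf3 j
      · obtain ⟨j, _, rfl⟩ := Finset.mem_image.1 ht
        exact hg3 j
    · rw [Finset.mem_singleton] at ht
      subst ht
      exact hroot

/-- No nonreal roots of `Q` when `Q` has a root in `(-ω₀, ω₀)`. -/
lemma Q_no_nonreal_root (hN : 0 < N) (hm : ∀ j, 0 < m j) (hω : ∀ j, 0 < ω j)
    (hmono : StrictMono ω) {r₀ : ℝ} (hr₀l : -ω ⟨0, hN⟩ < r₀) (hr₀u : r₀ < ω ⟨0, hN⟩)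
    (hroot : (Q N α B s m ω).eval r₀ = 0) :
    ∀ z : ℂ, ((Q N α B s m ω).map Complex.ofRealHom).eval z = 0 → z.im = 0 := by
  intro z hz
  by_contra him
  obtain ⟨T, hTcard, hTroots⟩ := exists_roots_generic (Q N α B s m ω) N hN ω hω hmono
    Q_natDegree_leadingCoeff.1 Q_natDegree_leadingCoeff.2
    (fun j t ht => Q_sign hm hω hmono j t ht) r₀ hr₀l hr₀u hroot
  have hp0 : Q N α B s m ω ≠ 0 := by
    intro h
    have hlc := (Q_natDegree_leadingCoeff (N := N) (α := α) (B := B) (s := s)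
      (m := m) (ω := ω)).2
    rw [h, leadingCoeff_zero] at hlc
    have h1 : ((-1 : ℝ) ^ (N + 1)) ≠ 0 := by positivity
    exact h1 hlc.symm
  have hbound := nonreal_root_bound (Q N α B s m ω) hp0 T hTroots z hz him
  rw [hTcard, Q_natDegree_leadingCoeff.1] at hbound
  omega

/-- From the eigenvector equations, a nonzero circular component `ζ` forces
`-i·lam` to be a root of the complexified characteristic polynomial `Q`. -/
lemma eig_root (lam ζ : ℂ) (Z : Fin N → ℂ)
    (hmain : lam ^ 2 * ζ = -((α : ℂ) + ∑ k, (m k : ℂ) * (ω k : ℂ) ^ 2) * ζ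
      - (s : ℂ) * Complex.I * (B : ℂ) * lam * ζ + ∑ k, (m k : ℂ) * (ω k : ℂ) ^ 2 * Z k)
    (hZ : ∀ k, lam ^ 2 * Z k = (ω k : ℂ) ^ 2 * ζ - (ω k : ℂ) ^ 2 * Z k) :
    ((Q N α B s m ω).map Complex.ofRealHom).eval (-Complex.I * lam) * ζ = 0 := by
  rw [Q_eval_map]
  have hz2 : (-Complex.I * lam) ^ 2 = -lam ^ 2 := by
    rw [mul_pow]
    rw [neg_pow, Complex.I_sq]
    ring
  simp only [hz2, sub_neg_eq_add]
  rw [sub_mul, Finset.sum_mul]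
  have hterm : ∀ j ∈ Finset.univ, (m j : ℂ) * (ω j : ℂ) ^ 2 * (-lam ^ 2) *
      (∏ k ∈ Finset.univ.erase j, ((ω k : ℂ) ^ 2 + lam ^ 2)) * ζ
      = (∏ k, ((ω k : ℂ) ^ 2 + lam ^ 2)) * ((m j : ℂ) * (ω j : ℂ) ^ 2 * (Z j - ζ)) := by
    intro j _
    have hD := Finset.prod_erase_mul Finset.univ
      (fun k => ((ω k : ℂ) ^ 2 + lam ^ 2)) (Finset.mem_univ j)
    linear_combination (-(m j : ℂ) * (ω j : ℂ) ^ 2 *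
        (∏ k ∈ Finset.univ.erase j, ((ω k : ℂ) ^ 2 + lam ^ 2))) * hZ j
      + ((m j : ℂ) * (ω j : ℂ) ^ 2 * (Z j - ζ)) * hD
  rw [Finset.sum_congr rfl hterm, ← Finset.mul_sum]
  have hsum : ∑ j, (m j : ℂ) * (ω j : ℂ) ^ 2 * (Z j - ζ)
      = (∑ j, (m j : ℂ) * (ω j : ℂ) ^ 2 * Z j) - (∑ j, (m j : ℂ) * (ω j : ℂ) ^ 2) * ζ := by
    rw [Finset.sum_mul, ← Finset.sum_sub_distrib]
    exact Finset.sum_congr rfl fun j _ => by ring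
  rw [hsum]
  linear_combination (∏ k, ((ω k : ℂ) ^ 2 + lam ^ 2)) * hmain

end BathAux

set_option maxHeartbeats 1000000 in
/-- Graphical stability criterion, stable case: in the gyroscopically stable regime
(α < 0, B > 0, α + B²/4 > 0), if the characteristic equation has a solution
0 < Ω₁ < ω₁ then every eigenvalue of the oscillator–bath matrix A is purely
imaginary. -/
theorem stmt10 (N : ℕ) (hN : 0 < N) (α B : ℝ) (m ω : Fin N → ℝ)
    (hm : ∀ j, 0 < m j) (hω : ∀ j, 0 < ω j) (hmono : StrictMono ω)
    (hα : α < 0) (hB : 0 < B) (hgyro : 0 < α + B ^ 2 / 4)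
    (hsol : ∃ w : ℝ, 0 < w ∧ w < ω ⟨0, hN⟩ ∧
      ∃ s : ℝ, (s = 1 ∨ s = -1) ∧
        (w + s * B / 2) ^ 2 - (α + B ^ 2 / 4) =
          ∑ j, m j * ω j ^ 2 * w ^ 2 / (w ^ 2 - ω j ^ 2)) :
    ∀ lam : ℂ,
      (lam • (1 : Matrix (BathIdx N) (BathIdx N) ℂ) -
        (bathA N α B m ω).map Complex.ofReal).det = 0 →
      lam.re = 0 := by
  classical
  obtain ⟨w, hw0, hwlt, s₀, hs₀, heq⟩ := hsol
  intro lam hdet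
  by_contra hre
  -- a root of Q between -ω₀ and ω₀, for either sign
  have hQr : ∀ s' : ℝ, s' = 1 ∨ s' = -1 → ∃ r₀ : ℝ,
      -ω ⟨0, hN⟩ < r₀ ∧ r₀ < ω ⟨0, hN⟩ ∧ (BathAux.Q N α B s' m ω).eval r₀ = 0 := by
    have hw := BathAux.Q_root_of_char hN hω hmono hw0 hwlt hs₀ heq
    have hω0 := hω ⟨0, hN⟩
    intro s' hs'
    rcases hs' with rfl | rfl <;> rcases hs₀ with rfl | rfl
    · exact ⟨w, by linarith, hwlt, hw⟩
    · refine ⟨-w, by linarith, by linarith, ?_⟩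
      rw [show (1 : ℝ) = -(-1) by norm_num, BathAux.Q_eval_neg]
      exact hw
    · refine ⟨-w, by linarith, by linarith, ?_⟩
      rw [show (-1 : ℝ) = -(1) by norm_num, BathAux.Q_eval_neg]
      exact hw
    · exact ⟨w, by linarith, hwlt, hw⟩
  -- eigenvector
  obtain ⟨v, hv0, hveq⟩ := Matrix.exists_mulVec_eq_zero_iff.mpr hdet
  have hv : ∀ i, lam * v i =
      ∑ jj, ((bathA N α B m ω).map Complex.ofReal) i jj * v jj := by
    intro i
    have h : ((lam • (1 : Matrix (BathIdx N) (BathIdx N) ℂ) -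
        (bathA N α B m ω).map Complex.ofReal).mulVec v) i = 0 := by rw [hveq]; rfl
    rw [Matrix.sub_mulVec, Pi.sub_apply, Matrix.smul_mulVec,
      Matrix.one_mulVec] at h
    have h' : lam * v i = ((bathA N α B m ω).map Complex.ofReal).mulVec v i := by
      have h2 := sub_eq_zero.mp h
      simpa using h2
    rw [h'] 
    simp [Matrix.mulVec, dotProduct]
  have h0 := hv (Sum.inl 0)
  have h1 := hv (Sum.inl 1)
  have h2 := hv (Sum.inl 2)
  have h3 := hv (Sum.inl 3)
  simp [Matrix.map_apply, Fintype.sum_sum_type, Fin.sum_univ_four,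
    Fintype.sum_prod_type, bathA, Matrix.of_apply] at h0
  simp [Matrix.map_apply, Fintype.sum_sum_type, Fin.sum_univ_four,
    Fintype.sum_prod_type, bathA, Matrix.of_apply] at h1
  simp [Matrix.map_apply, Fintype.sum_sum_type, Fin.sum_univ_four,
    Fintype.sum_prod_type, bathA, Matrix.of_apply] at h2
  simp [Matrix.map_apply, Fintype.sum_sum_type, Fin.sum_univ_four,
    Fintype.sum_prod_type, bathA, Matrix.of_apply] at h3
  have h4 : ∀ k : Fin N, lam * v (Sum.inr (k, 0)) = v (Sum.inr (k, 2)) := by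
    intro k
    have h := hv (Sum.inr (k, 0))
    simpa [Matrix.map_apply, Fintype.sum_sum_type, Fin.sum_univ_four,
      Fintype.sum_prod_type, bathA, Matrix.of_apply, apply_ite Complex.ofReal] using h
  have h5 : ∀ k : Fin N, lam * v (Sum.inr (k, 1)) = v (Sum.inr (k, 3)) := by
    intro k
    have h := hv (Sum.inr (k, 1))
    simpa [Matrix.map_apply, Fintype.sum_sum_type, Fin.sum_univ_four,
      Fintype.sum_prod_type, bathA, Matrix.of_apply, apply_ite Complex.ofReal] using h
  have h6 : ∀ k : Fin N, lam * v (Sum.inr (k, 2)) =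
      (ω k : ℂ) ^ 2 * v (Sum.inl 0) + -((ω k : ℂ) ^ 2 * v (Sum.inr (k, 0))) := by
    intro k
    have h := hv (Sum.inr (k, 2))
    simpa [Matrix.map_apply, Fintype.sum_sum_type, Fin.sum_univ_four,
      Fintype.sum_prod_type, bathA, Matrix.of_apply, apply_ite Complex.ofReal] using h
  have h7 : ∀ k : Fin N, lam * v (Sum.inr (k, 3)) =
      (ω k : ℂ) ^ 2 * v (Sum.inl 1) + -((ω k : ℂ) ^ 2 * v (Sum.inr (k, 1))) := by
    intro k
    have h := hv (Sum.inr (k, 3))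
    simpa [Matrix.map_apply, Fintype.sum_sum_type, Fin.sum_univ_four,
      Fintype.sum_prod_type, bathA, Matrix.of_apply, apply_ite Complex.ofReal] using h
  have hI : Complex.I ^ 2 = -1 := Complex.I_sq
  -- circular components
  have hZP : ∀ k : Fin N, lam ^ 2 * (v (Sum.inr (k, 0)) + Complex.I * v (Sum.inr (k, 1))) =
      (ω k : ℂ) ^ 2 * (v (Sum.inl 0) + Complex.I * v (Sum.inl 1)) -
        (ω k : ℂ) ^ 2 * (v (Sum.inr (k, 0)) + Complex.I * v (Sum.inr (k, 1))) := by
    intro k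
    linear_combination (h6 k) + Complex.I * (h7 k) + lam * (h4 k) + Complex.I * lam * (h5 k)
  have hZM : ∀ k : Fin N, lam ^ 2 * (v (Sum.inr (k, 0)) - Complex.I * v (Sum.inr (k, 1))) =
      (ω k : ℂ) ^ 2 * (v (Sum.inl 0) - Complex.I * v (Sum.inl 1)) -
        (ω k : ℂ) ^ 2 * (v (Sum.inr (k, 0)) - Complex.I * v (Sum.inr (k, 1))) := by
    intro k
    linear_combination (h6 k) - Complex.I * (h7 k) + lam * (h4 k) - Complex.I * lam * (h5 k)
  have hmainP : lam ^ 2 * (v (Sum.inl 0) + Complex.I * v (Sum.inl 1)) =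
      -((α : ℂ) + ∑ k, (m k : ℂ) * (ω k : ℂ) ^ 2) *
          (v (Sum.inl 0) + Complex.I * v (Sum.inl 1))
        - ((1 : ℝ) : ℂ) * Complex.I * (B : ℂ) * lam *
          (v (Sum.inl 0) + Complex.I * v (Sum.inl 1))
        + ∑ k, (m k : ℂ) * (ω k : ℂ) ^ 2 *
            (v (Sum.inr (k, 0)) + Complex.I * v (Sum.inr (k, 1))) := by
    push_cast
    have hsplit : ∑ k, (m k : ℂ) * (ω k : ℂ) ^ 2 *
        (v (Sum.inr (k, 0)) + Complex.I * v (Sum.inr (k, 1)))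
        = (∑ k, (m k : ℂ) * (ω k : ℂ) ^ 2 * v (Sum.inr (k, 0)))
          + Complex.I * ∑ k, (m k : ℂ) * (ω k : ℂ) ^ 2 * v (Sum.inr (k, 1)) := by
      rw [Finset.mul_sum, ← Finset.sum_add_distrib]
      exact Finset.sum_congr rfl fun k _ => by ring
    rw [hsplit]
    linear_combination h2 + Complex.I * h3 + (lam + Complex.I * (B : ℂ)) * h0
      + (Complex.I * lam - (B : ℂ)) * h1 + ((B : ℂ) * lam * v (Sum.inl 1)) * hI
  have hmainM : lam ^ 2 * (v (Sum.inl 0) - Complex.I * v (Sum.inl 1)) =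
      -((α : ℂ) + ∑ k, (m k : ℂ) * (ω k : ℂ) ^ 2) *
          (v (Sum.inl 0) - Complex.I * v (Sum.inl 1))
        - ((-1 : ℝ) : ℂ) * Complex.I * (B : ℂ) * lam *
          (v (Sum.inl 0) - Complex.I * v (Sum.inl 1))
        + ∑ k, (m k : ℂ) * (ω k : ℂ) ^ 2 *
            (v (Sum.inr (k, 0)) - Complex.I * v (Sum.inr (k, 1))) := by
    push_cast
    have hsplit : ∑ k, (m k : ℂ) * (ω k : ℂ) ^ 2 *
        (v (Sum.inr (k, 0)) - Complex.I * v (Sum.inr (k, 1)))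
        = (∑ k, (m k : ℂ) * (ω k : ℂ) ^ 2 * v (Sum.inr (k, 0)))
          - Complex.I * ∑ k, (m k : ℂ) * (ω k : ℂ) ^ 2 * v (Sum.inr (k, 1)) := by
      rw [Finset.mul_sum, ← Finset.sum_sub_distrib]
      exact Finset.sum_congr rfl fun k _ => by ring
    rw [hsplit]
    linear_combination h2 - Complex.I * h3 + (lam - Complex.I * (B : ℂ)) * h0
      + (-(Complex.I * lam) - (B : ℂ)) * h1 + ((B : ℂ) * lam * v (Sum.inl 1)) * hI
  -- nonvanishing denominators
  have hne : ∀ k : Fin N, ((ω k : ℂ) ^ 2 + lam ^ 2) ≠ 0 := by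
    intro k hzero
    have hIm : (lam ^ 2).im = 0 := by
      have h := congrArg Complex.im hzero
      simpa [← Complex.ofReal_pow] using h
    have hRe : (lam ^ 2).re = -(ω k ^ 2) := by
      have h := congrArg Complex.re hzero
      simp [← Complex.ofReal_pow] at h
      linarith
    have him0 : lam.im = 0 := by
      rw [sq, Complex.mul_im] at hIm
      have h2 : lam.re * lam.im = 0 := by linarith
      rcases mul_eq_zero.mp h2 with h | h
      · exact absurd h hre
      · exact h
    rw [sq, Complex.mul_re, him0] at hRe
    simp only [mul_zero, sub_zero] at hRe
    nlinarith [mul_self_nonneg lam.re, mul_pos (hω k) (hω k)]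
  -- a root of the characteristic polynomial off the imaginary axis
  have hroot : ∃ s' : ℝ, (s' = 1 ∨ s' = -1) ∧
      ((BathAux.Q N α B s' m ω).map Complex.ofRealHom).eval (-Complex.I * lam) = 0 := by
    by_cases hzeta : v (Sum.inl 0) + Complex.I * v (Sum.inl 1) = 0
    · by_cases hxi : v (Sum.inl 0) - Complex.I * v (Sum.inl 1) = 0
      · exfalso
        apply hv0
        have hx0 : v (Sum.inl 0) = 0 := by linear_combination hzeta / 2 + hxi / 2
        have hy0 : v (Sum.inl 1) = 0 := by
          linear_combination (Complex.I / 2) * hxi - (Complex.I / 2) * hzeta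
            + (v (Sum.inl 1)) * hI
        have hZ0 : ∀ k : Fin N, v (Sum.inr (k, 0)) = 0 ∧ v (Sum.inr (k, 1)) = 0 := by
          intro k
          have hzp : ((ω k : ℂ) ^ 2 + lam ^ 2) *
              (v (Sum.inr (k, 0)) + Complex.I * v (Sum.inr (k, 1))) = 0 := by
            linear_combination (hZP k) + (ω k : ℂ) ^ 2 * hzeta
          have hzm : ((ω k : ℂ) ^ 2 + lam ^ 2) *
              (v (Sum.inr (k, 0)) - Complex.I * v (Sum.inr (k, 1))) = 0 := by
            linear_combination (hZM k) + (ω k : ℂ) ^ 2 * hxi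
          have hzp' := (mul_eq_zero.mp hzp).resolve_left (hne k)
          have hzm' := (mul_eq_zero.mp hzm).resolve_left (hne k)
          constructor
          · linear_combination hzp' / 2 + hzm' / 2
          · linear_combination (Complex.I / 2) * hzm' - (Complex.I / 2) * hzp'
              + (v (Sum.inr (k, 1))) * hI
        funext i
        show v i = 0
        rcases i with i | ⟨k, l⟩
        · fin_cases i
          · exact hx0
          · exact hy0
          · show v (Sum.inl 2) = 0
            rw [← h0, hx0, mul_zero]
          · show v (Sum.inl 3) = 0
            rw [← h1, hy0, mul_zero]
        · fin_cases l
          · exact (hZ0 k).1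
          · exact (hZ0 k).2
          · show v (Sum.inr (k, 2)) = 0
            rw [← h4 k, (hZ0 k).1, mul_zero]
          · show v (Sum.inr (k, 3)) = 0
            rw [← h5 k, (hZ0 k).2, mul_zero]
      · refine ⟨-1, Or.inr rfl, ?_⟩
        have hev := BathAux.eig_root (s := (-1 : ℝ)) lam
          (v (Sum.inl 0) - Complex.I * v (Sum.inl 1))
          (fun k => v (Sum.inr (k, 0)) - Complex.I * v (Sum.inr (k, 1))) hmainM hZM
        exact (mul_eq_zero.mp hev).resolve_right hxi
    · refine ⟨1, Or.inl rfl, ?_⟩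
      have hev := BathAux.eig_root (s := (1 : ℝ)) lam
        (v (Sum.inl 0) + Complex.I * v (Sum.inl 1))
        (fun k => v (Sum.inr (k, 0)) + Complex.I * v (Sum.inr (k, 1))) hmainP hZP
      exact (mul_eq_zero.mp hev).resolve_right hzeta
  obtain ⟨s', hs', hev⟩ := hroot
  obtain ⟨r₀, hr1, hr2, hr3⟩ := hQr s' hs'
  have him := BathAux.Q_no_nonreal_root hN hm hω hmono hr1 hr2 hr3 (-Complex.I * lam) hev
  apply hre
  have himeq : (-Complex.I * lam).im = -lam.re := by simp
  rw [himeq] at him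
  linarith
end
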